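/- arXiv:2405.04143 — 11 statements merged into one kernel-verified Lean document; each statement's English description precedes it below -/
import Mathlib

section
/- Let n ≥ 1, let m ≥ 2 be an integer, let C be a ℤ-submodule of (ℤ/mℤ)^n, and let Λ_A(C) = {x ∈ ℤ^n : (x mod m) ∈ C} be the associated Construction A lattice. Then for every real q with 0 ≤ q < 1, ∑_{x ∈ Λ_A(C)} q^{‖x‖₁} = (1 - q^m)^{-n} · ∑_{c ∈ C} ∏_{i=1}^n (q^{c̄ᵢ} + q^{m - c̄ᵢ}), where c̄ᵢ ∈ {0, 1, …, m−1} denotes the integer representative of the coordinate cᵢ ∈ ℤ/mℤ. (Both series converge absolutely.) -/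
/-!
Reduction mod `m` splits `Λ_A(C)` into the cosets `c̄ + mℤⁿ`, `c ∈ C`. On a coset the weight
`q ^ ‖x‖₁` is a product over the coordinates, and each coordinate ranges over `v + mℤ` with
`0 ≤ v < m`, whose weights form two geometric series summing to `(q ^ v + q ^ (m - v)) / (1 - q ^ m)`.
Carrying out the computation in `ℝ≥0∞` removes all summability side conditions; since the result
is finite, it transfers back to `ℝ`.
-/

open scoped ENNReal

namespace ENNReal

theorem tsum_pi_prod_fin {n : ℕ} {β : Fin n → Type*} (f : ∀ i, β i → ℝ≥0∞) :
    ∑' k : (∀ i, β i), ∏ i, f i (k i) = ∏ i, ∑' b, f i b := by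
  induction n with
  | zero => simp [tsum_fintype]
  | succ n ih =>
    rw [← (Fin.consEquiv β).tsum_eq, ENNReal.tsum_prod', Fin.prod_univ_succ]
    simp only [Fin.consEquiv_apply, Fin.prod_univ_succ, Fin.cons_zero, Fin.cons_succ,
      ENNReal.tsum_mul_left, ENNReal.tsum_mul_right, ih]

theorem tsum_pi_prod {ι : Type*} [Fintype ι] {β : ι → Type*} (f : ∀ i, β i → ℝ≥0∞) :
    ∑' k : (∀ i, β i), ∏ i, f i (k i) = ∏ i, ∑' b, f i b := by
  let e := Fintype.equivFin ι
  rw [← (Equiv.piCongrLeft' β e).symm.tsum_eq, ← e.symm.prod_comp]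
  simp only [← e.symm.prod_comp (fun i => f i _), Equiv.piCongrLeft'_symm_apply_apply]
  exact tsum_pi_prod_fin fun j => f (e.symm j)

theorem hasSum_toReal_of_tsum_eq {α : Type*} {f : α → ℝ≥0∞} {a : ℝ≥0∞}
    (h : ∑' x, f x = a) (ha : a ≠ ∞) : HasSum (fun x => (f x).toReal) a.toReal := by
  subst h
  rw [ENNReal.tsum_toReal_eq fun x => ENNReal.ne_top_of_tsum_ne_top ha x]
  exact ENNReal.hasSum_toReal ha

theorem tsum_pow_natAbs_add_mul (Q : ℝ≥0∞) {m v : ℕ} (hv : v < m) :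
    ∑' k : ℤ, Q ^ ((v : ℤ) + m * k).natAbs = (Q ^ v + Q ^ (m - v)) * (1 - Q ^ m)⁻¹ := by
  have h_nonneg (k : ℕ) : ((v : ℤ) + m * k).natAbs = v + m * k := by omega
  have h_neg (k : ℕ) : ((v : ℤ) + m * -(k + 1)).natAbs = (m - v) + m * k := by
    rw [Int.natAbs_eq_iff]; right; push_cast [Nat.cast_sub hv.le]; ring
  rw [tsum_of_nat_of_neg_add_one ENNReal.summable ENNReal.summable]
  simp only [h_nonneg, h_neg, pow_add, pow_mul, ENNReal.tsum_mul_left, ENNReal.tsum_geometric]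
  ring

end ENNReal

namespace ZMod

variable {m : ℕ} [NeZero m]

def intCastFiberEquiv (r : ZMod m) : ℤ ≃ {z : ℤ // (z : ZMod m) = r} where
  toFun k := ⟨r.val + m * k, by simp⟩
  invFun z := z.1 / m
  left_inv k := by
    have := r.val_lt
    dsimp only
    rw [Int.add_mul_ediv_left _ _ (by exact_mod_cast NeZero.ne m),
      Int.ediv_eq_zero_of_lt (by omega) (by omega), zero_add]
  right_inv := by
    rintro ⟨z, rfl⟩
    ext
    simp only [ZMod.val_intCast, Int.emod_add_mul_ediv]

theorem tsum_pow_natAbs_intCast_eq (Q : ℝ≥0∞) (r : ZMod m) :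
    ∑' z : {z : ℤ // (z : ZMod m) = r}, Q ^ z.1.natAbs
      = (Q ^ r.val + Q ^ (m - r.val)) * (1 - Q ^ m)⁻¹ := by
  rw [← (intCastFiberEquiv r).tsum_eq]
  exact ENNReal.tsum_pow_natAbs_add_mul Q r.val_lt

end ZMod

def constructionA {ι : Type*} (m : ℕ) (S : Set (ι → ZMod m)) : Set (ι → ℤ) :=
  (fun x i => (x i : ZMod m)) ⁻¹' S

theorem tsum_pow_sum_natAbs_constructionA {ι : Type*} [Fintype ι] {m : ℕ} [NeZero m]
    (S : Set (ι → ZMod m)) (Q : ℝ≥0∞) :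
    ∑' x : constructionA m S, Q ^ ∑ i, (x.1 i).natAbs
      = (1 - Q ^ m)⁻¹ ^ Fintype.card ι
        * ∑' c : S, ∏ i, (Q ^ (c.1 i).val + Q ^ (m - (c.1 i).val)) := by
  let reduce : (ι → ℤ) → ι → ZMod m := fun x i => x i
  have h_coset (c : ι → ZMod m) :
      ∑' x : {x // reduce x = c}, Q ^ ∑ i, (x.1 i).natAbs
        = (1 - Q ^ m)⁻¹ ^ Fintype.card ι * ∏ i, (Q ^ (c i).val + Q ^ (m - (c i).val)) := by
    let e : {x // reduce x = c} ≃ ∀ i, {z : ℤ // (z : ZMod m) = c i} :=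
      (Equiv.subtypeEquivRight fun _ => funext_iff).trans
        (Equiv.subtypePiEquivPi (p := fun i (z : ℤ) => (z : ZMod m) = c i))
    rw [← e.symm.tsum_eq]
    simp only [← Finset.prod_pow_eq_pow_sum]
    refine (ENNReal.tsum_pi_prod fun i (z : {z : ℤ // (z : ZMod m) = c i}) =>
      Q ^ z.1.natAbs).trans ?_
    simp only [ZMod.tsum_pow_natAbs_intCast_eq, Finset.prod_mul_distrib, Finset.prod_const,
      Finset.card_univ, mul_comm]
  let e : (Σ c : S, {x // reduce x = c}) ≃ constructionA m S :=
    Equiv.sigmaSubtypeFiberEquivSubtype reduce fun _ => Iff.rfl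
  rw [← e.tsum_eq, ENNReal.tsum_sigma', ← ENNReal.tsum_mul_left]
  exact tsum_congr fun c => h_coset c

theorem theta_one_constructionA_general
    (n m : ℕ) (hm : 2 ≤ m)
    (C : Submodule ℤ (Fin n → ZMod m))
    (q : ℝ) (hq0 : 0 ≤ q) (hq1 : q < 1) :
    Summable (fun x : {x : Fin n → ℤ // (fun i => ((x i : ℤ) : ZMod m)) ∈ C} =>
      q ^ (∑ i, (x.val i).natAbs)) ∧
    (∑' x : {x : Fin n → ℤ // (fun i => ((x i : ℤ) : ZMod m)) ∈ C},
        q ^ (∑ i, (x.val i).natAbs))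
      = (1 - q ^ m)⁻¹ ^ n *
        ∑' c : C, ∏ i, (q ^ (((c : Fin n → ZMod m)) i).val
          + q ^ (m - (((c : Fin n → ZMod m)) i).val)) := by
  have : NeZero m := ⟨by omega⟩
  set Q := ENNReal.ofReal q
  have hQ : Q.toReal = q := ENNReal.toReal_ofReal hq0
  have hQ_pow_ne_top (k : ℕ) : Q ^ k ≠ ∞ := ENNReal.pow_ne_top ENNReal.ofReal_ne_top
  have hQm : Q ^ m < 1 := pow_lt_one₀ zero_le (ENNReal.ofReal_lt_one.2 hq1) (by omega)
  have h_factor_ne_top (c : Fin n → ZMod m) :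
      ∏ i, (Q ^ (c i).val + Q ^ (m - (c i).val)) ≠ ∞ :=
    ENNReal.prod_ne_top fun i _ => ENNReal.add_ne_top.2 ⟨hQ_pow_ne_top _, hQ_pow_ne_top _⟩
  have h := ENNReal.hasSum_toReal_of_tsum_eq
    (tsum_pow_sum_natAbs_constructionA (C : Set (Fin n → ZMod m)) Q) <| by
      have := Fintype.ofFinite (C : Set (Fin n → ZMod m))
      rw [tsum_fintype]
      exact ENNReal.mul_ne_top (ENNReal.pow_ne_top (ENNReal.inv_ne_top.2 (tsub_pos_of_lt hQm).ne'))
        (ENNReal.sum_ne_top.2 fun c _ => h_factor_ne_top c)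
  simp only [ENNReal.toReal_mul, ENNReal.toReal_pow, ENNReal.toReal_inv,
    ENNReal.toReal_sub_of_le hQm.le ENNReal.one_ne_top, ENNReal.toReal_one,
    ENNReal.tsum_toReal_eq fun c : (C : Set (Fin n → ZMod m)) => h_factor_ne_top c,
    ENNReal.toReal_prod, ENNReal.toReal_add, hQ_pow_ne_top, ne_eq, not_false_eq_true, hQ,
    Fintype.card_fin] at h
  exact ⟨h.summable, h.tsum_eq⟩

/-- Theorem: ℓ¹-theta function of a Construction A lattice from an m-ary linear code. -/
theorem theta_one_constructionA
    (n m : ℕ) (hn : 1 ≤ n) (hm : 2 ≤ m)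
    (C : Submodule ℤ (Fin n → ZMod m))
    (q : ℝ) (hq0 : 0 ≤ q) (hq1 : q < 1) :
    Summable (fun x : {x : Fin n → ℤ // (fun i => ((x i : ℤ) : ZMod m)) ∈ C} =>
      q ^ (∑ i, (x.val i).natAbs)) ∧
    (∑' x : {x : Fin n → ℤ // (fun i => ((x i : ℤ) : ZMod m)) ∈ C},
        q ^ (∑ i, (x.val i).natAbs))
      = (1 - q ^ m)⁻¹ ^ n *
        ∑' c : C, ∏ i, (q ^ (((c : Fin n → ZMod m)) i).val
          + q ^ (m - (((c : Fin n → ZMod m)) i).val)) :=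
  theta_one_constructionA_general n m hm C q hq0 hq1
end

section
/- Let n ≥ 1, let m ≥ 2 be an integer, let C be a ℤ-submodule of (ℤ/mℤ)^n, and let C^⊥ = {y ∈ (ℤ/mℤ)^n : ∑_{i=1}^n yᵢxᵢ = 0 for all x ∈ C} be its dual code. Then for every real q with 0 ≤ q < 1, ∑_{x ∈ Λ_A(C^⊥)} q^{‖x‖₁} = ((1 - q²)^n / |C|) · ∑_{c ∈ C} ∏_{i=1}^n 1/(q² − 2q·cos(2π c̄ᵢ / m) + 1), where c̄ᵢ ∈ {0, 1, …, m−1} denotes the integer representative of the coordinate cᵢ ∈ ℤ/mℤ and Λ_A(C^⊥) = {x ∈ ℤ^n : (x mod m) ∈ C^⊥}. -/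
/-!
Averaging the additive character `c ↦ exp (2πi ⟨x, c⟩ / m)` over the code `C` gives `|C|` when
`x mod m ∈ C^⊥` and `0` otherwise. Hence the theta series of `Λ_A(C^⊥)` is `|C|⁻¹` times the sum over
`c ∈ C` of the twisted series `∑_{x ∈ ℤⁿ} q^{‖x‖₁} exp (2πi ⟨x, c⟩ / m)`, and each of these
factorises over the coordinates into Poisson kernels
`∑_{k ∈ ℤ} q^{|k|} e^{ikθ} = (1 - q²) / (1 - 2q cos θ + q²)`.
-/

open Finset

theorem hasSum_pow_natAbs_mul_zpow {K : Type*} [NormedField K] [CompleteSpace K] {r z : K}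
    (hr : ‖r‖ < 1) (hz : ‖z‖ = 1) :
    HasSum (fun k : ℤ => r ^ k.natAbs * z ^ k) ((1 - r ^ 2) / ((1 - r * z) * (1 - r * z⁻¹))) := by
  have hz0 : z ≠ 0 := norm_ne_zero_iff.mp (by rw [hz]; exact one_ne_zero)
  have hrz : ‖r * z‖ < 1 := by rwa [norm_mul, hz, mul_one]
  have hrz' : ‖r * z⁻¹‖ < 1 := by rwa [norm_mul, norm_inv, hz, inv_one, mul_one]
  have h₁ : 1 - r * z ≠ 0 := fun h => by
    rw [← eq_of_sub_eq_zero h, norm_one] at hrz; exact hrz.false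
  have h₂ : 1 - r * z⁻¹ ≠ 0 := fun h => by
    rw [← eq_of_sub_eq_zero h, norm_one] at hrz'; exact hrz'.false
  have hnonneg : HasSum (fun k : ℕ => r ^ (k : ℤ).natAbs * z ^ (k : ℤ)) (1 - r * z)⁻¹ := by
    simpa only [Int.natAbs_natCast, zpow_natCast, mul_pow] using
      hasSum_geometric_of_norm_lt_one hrz
  have hneg : HasSum (fun k : ℕ => r ^ (-(k + 1 : ℤ)).natAbs * z ^ (-(k + 1 : ℤ)))
      (r * z⁻¹ * (1 - r * z⁻¹)⁻¹) := by
    have hterm (k : ℕ) :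
        r ^ (-(k + 1 : ℤ)).natAbs * z ^ (-(k + 1 : ℤ)) = r * z⁻¹ * (r * z⁻¹) ^ k := by
      rw [show (-(k + 1 : ℤ)).natAbs = k + 1 by omega, zpow_neg, ← Nat.cast_succ, zpow_natCast,
        ← inv_pow, ← mul_pow, pow_succ']
    simpa only [hterm] using (hasSum_geometric_of_norm_lt_one hrz').mul_left (r * z⁻¹)
  convert HasSum.of_nat_of_neg_add_one (f := fun k : ℤ => r ^ k.natAbs * z ^ k) hnonneg hneg
    using 1
  rw [div_eq_iff (mul_ne_zero h₁ h₂)]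
  linear_combination -(1 - r * z⁻¹) * inv_mul_cancel₀ h₁
    - r * z⁻¹ * (1 - r * z) * inv_mul_cancel₀ h₂ + r ^ 2 * mul_inv_cancel₀ hz0

theorem summable_pow_natAbs {q : ℝ} (hq0 : 0 ≤ q) (hq1 : q < 1) :
    Summable fun k : ℤ => q ^ k.natAbs := by
  simpa using (hasSum_pow_natAbs_mul_zpow (r := q) (z := 1)
    (by rwa [Real.norm_of_nonneg hq0]) norm_one).summable

theorem one_sub_mul_exp_mul_one_sub_mul_exp_inv (r θ : ℂ) :
    (1 - r * Complex.exp (θ * Complex.I)) * (1 - r * (Complex.exp (θ * Complex.I))⁻¹)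
      = r ^ 2 - 2 * r * Complex.cos θ + 1 := by
  rw [← Complex.exp_neg, Complex.cos, ← neg_mul]
  have h := Complex.exp_add (θ * Complex.I) (-θ * Complex.I)
  rw [← add_mul, add_neg_cancel, zero_mul, Complex.exp_zero] at h
  linear_combination -r ^ 2 * h

section ProdFin

variable {κ R : Type*} [NormedCommRing R]

theorem summable_norm_prod_fin (n : ℕ) (f : Fin n → κ → R)
    (hf : ∀ i, Summable fun k => ‖f i k‖) :
    Summable fun x : Fin n → κ => ‖∏ i, f i (x i)‖ := by
  induction n with
  | zero => exact .of_finite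
  | succ n ih =>
    refine (Fin.consEquiv fun _ : Fin (n + 1) => κ).summable_iff.mp ?_
    simpa [Function.comp_def, Fin.prod_univ_succ] using
      (hf 0).mul_norm (ih (fun i => f i.succ) fun i => hf i.succ)

theorem hasSum_prod_fin [CompleteSpace R] (n : ℕ) (f : Fin n → κ → R)
    (hf : ∀ i, Summable fun k => ‖f i k‖) :
    HasSum (fun x : Fin n → κ => ∏ i, f i (x i)) (∏ i, ∑' k, f i k) := by
  induction n with
  | zero => simp
  | succ n ih =>
    have htail (i : Fin n) : Summable fun k => ‖f i.succ k‖ := hf i.succ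
    have hpair : Summable fun p : κ × (Fin n → κ) => f 0 p.1 * ∏ i : Fin n, f i.succ (p.2 i) :=
      summable_mul_of_summable_norm (f := f 0)
        (g := fun y : Fin n → κ => ∏ i : Fin n, f i.succ (y i))
        (hf 0) (summable_norm_prod_fin n _ htail)
    have h := (hf 0).of_norm.hasSum.mul (ih _ htail) hpair
    refine (Fin.consEquiv fun _ : Fin (n + 1) => κ).hasSum_iff.mp ?_
    simpa [Function.comp_def, Fin.prod_univ_succ] using h

end ProdFin

theorem AddChar.map_sum_eq_prod {ι A M : Type*} [AddCommMonoid A] [CommMonoid M]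
    (ψ : AddChar A M) (s : Finset ι) (f : ι → A) : ψ (∑ i ∈ s, f i) = ∏ i ∈ s, ψ (f i) := by
  simpa [← ofAdd_sum] using map_prod ψ.toMonoidHom (fun i => Multiplicative.ofAdd (f i)) s

theorem AddChar.sum_comp_eq_ite {G A R : Type*} [AddGroup G] [Fintype G] [AddGroup A]
    [CommRing R] [IsDomain R] {ψ : AddChar A R} (hψ : Function.Injective ψ) (φ : G →+ A)
    [Decidable (φ = 0)] :
    ∑ g, ψ (φ g) = if φ = 0 then (Fintype.card G : R) else 0 := by
  classical
  have htrivial : ψ.compAddMonoidHom φ = 0 ↔ φ = 0 := by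
    simp only [DFunLike.ext_iff, AddChar.compAddMonoidHom_apply, AddChar.zero_apply,
      AddMonoidHom.zero_apply, ← hψ.eq_iff, AddChar.map_zero_eq_one]
  simpa only [htrivial, AddChar.compAddMonoidHom_apply] using (ψ.compAddMonoidHom φ).sum_eq_ite

section ConstructionA

variable {m : ℕ} [NeZero m] {ι : Type*} [Fintype ι]

def constructionAOfDual (C : Submodule ℤ (ι → ZMod m)) : Set (ι → ℤ) :=
  {x | ∀ z ∈ C, ∑ i, (x i : ZMod m) * z i = 0}

theorem indicator_constructionAOfDual (C : Submodule ℤ (ι → ZMod m)) [Fintype C]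
    (f : (ι → ℤ) → ℂ) (x : ι → ℤ) :
    (constructionAOfDual C).indicator f x
      = (Fintype.card C : ℂ)⁻¹ *
          ∑ c : C, f x * ZMod.stdAddChar (∑ i, (x i : ZMod m) * c.1 i) := by
  classical
  let φ : C →+ ZMod m :=
    { toFun := fun c => ∑ i, (x i : ZMod m) * c.1 i
      map_zero' := by simp
      map_add' := fun c d => by simp [mul_add, sum_add_distrib] }
  have hφ : φ = 0 ↔ x ∈ constructionAOfDual C := by
    simp [DFunLike.ext_iff, constructionAOfDual, φ]
  have horth : ∑ c : C, ZMod.stdAddChar (∑ i, (x i : ZMod m) * c.1 i)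
      = if φ = 0 then (Fintype.card C : ℂ) else 0 :=
    AddChar.sum_comp_eq_ite ZMod.injective_stdAddChar φ
  rw [← mul_sum, horth]
  by_cases hx : x ∈ constructionAOfDual C
  · have hcard : (Fintype.card C : ℂ) ≠ 0 := Nat.cast_ne_zero.mpr Fintype.card_ne_zero
    rw [Set.indicator_of_mem hx, if_pos (hφ.mpr hx)]
    field_simp
  · rw [Set.indicator_of_notMem hx, if_neg (mt hφ.mp hx), mul_zero, mul_zero]

theorem hasSum_pow_natAbs_mul_stdAddChar {q : ℝ} (hq0 : 0 ≤ q) (hq1 : q < 1) (a : ZMod m) :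
    HasSum (fun k : ℤ => (q : ℂ) ^ k.natAbs * ZMod.stdAddChar (k • a))
      (((1 - q ^ 2) / (q ^ 2 - 2 * q * Real.cos (2 * Real.pi * a.val / m) + 1) : ℝ) : ℂ) := by
  set θ : ℝ := 2 * Real.pi * a.val / m
  have hψ : ZMod.stdAddChar a = Complex.exp (θ * Complex.I) := by
    rw [ZMod.stdAddChar_apply, ZMod.toCircle_apply]
    push_cast [θ]
    ring_nf
  have hq : ‖(q : ℂ)‖ < 1 := by rwa [Complex.norm_real, Real.norm_of_nonneg hq0]
  have hval : (((1 - q ^ 2) / (q ^ 2 - 2 * q * Real.cos θ + 1) : ℝ) : ℂ)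
      = (1 - (q : ℂ) ^ 2) / ((1 - q * Complex.exp (θ * Complex.I))
          * (1 - q * (Complex.exp (θ * Complex.I))⁻¹)) := by
    rw [one_sub_mul_exp_mul_one_sub_mul_exp_inv]
    push_cast
    rfl
  simp_rw [AddChar.map_zsmul_eq_zpow, hψ, hval]
  exact hasSum_pow_natAbs_mul_zpow hq (Complex.norm_exp_ofReal_mul_I θ)

theorem hasSum_pow_sum_natAbs_mul_stdAddChar {n : ℕ} {q : ℝ} (hq0 : 0 ≤ q) (hq1 : q < 1)
    (c : Fin n → ZMod m) :
    HasSum (fun x : Fin n → ℤ => (q : ℂ) ^ (∑ i, (x i).natAbs) *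
        ZMod.stdAddChar (∑ i, (x i : ZMod m) * c i))
      (∏ i, (((1 - q ^ 2) /
        (q ^ 2 - 2 * q * Real.cos (2 * Real.pi * (c i).val / m) + 1) : ℝ) : ℂ)) := by
  have hnorm (i : Fin n) :
      Summable fun k : ℤ => ‖(q : ℂ) ^ k.natAbs * ZMod.stdAddChar (k • c i)‖ := by
    simpa [Complex.norm_real, abs_of_nonneg hq0] using summable_pow_natAbs hq0 hq1
  have h := hasSum_prod_fin n _ hnorm
  simp only [fun i => (hasSum_pow_natAbs_mul_stdAddChar hq0 hq1 (c i)).tsum_eq] at h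
  simpa only [prod_mul_distrib, prod_pow_eq_pow_sum, ← AddChar.map_sum_eq_prod, zsmul_eq_mul]
    using h

end ConstructionA

theorem theta_one_constructionA_dual_general
    (n m : ℕ) (hm : 2 ≤ m)
    (C : Submodule ℤ (Fin n → ZMod m))
    (q : ℝ) (hq0 : 0 ≤ q) (hq1 : q < 1) :
    (∑' x : {x : Fin n → ℤ //
        ∀ z ∈ C, ∑ i, ((x i : ℤ) : ZMod m) * z i = 0},
        q ^ (∑ i, (x.val i).natAbs))
      = (1 - q ^ 2) ^ n / (Nat.card C : ℝ) *
        ∑' c : C, ∏ i,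
          1 / (q ^ 2 - 2 * q * Real.cos (2 * Real.pi *
              ((((c : Fin n → ZMod m)) i).val : ℝ) / (m : ℝ)) + 1) := by
  have : NeZero m := ⟨by omega⟩
  have : Fintype C := Fintype.ofFinite C
  have hsum : HasSum
      (fun x => (constructionAOfDual C).indicator
        (fun x => ((q ^ (∑ i, (x i).natAbs) : ℝ) : ℂ)) x)
      ((Fintype.card C : ℂ)⁻¹ * ∑ c : C, ∏ i, (((1 - q ^ 2) /
        (q ^ 2 - 2 * q * Real.cos (2 * Real.pi * (c.1 i).val / m) + 1) : ℝ) : ℂ)) := by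
    simp only [indicator_constructionAOfDual, Complex.ofReal_pow]
    exact (hasSum_sum fun c _ => hasSum_pow_sum_natAbs_mul_stdAddChar hq0 hq1 c.1).mul_left _
  have hval : (Fintype.card C : ℂ)⁻¹ * ∑ c : C, ∏ i, (((1 - q ^ 2) /
        (q ^ 2 - 2 * q * Real.cos (2 * Real.pi * (c.1 i).val / m) + 1) : ℝ) : ℂ)
      = (((1 - q ^ 2) ^ n / (Nat.card C : ℝ) * ∑' c : C, ∏ i,
          1 / (q ^ 2 - 2 * q * Real.cos (2 * Real.pi * (c.1 i).val / m) + 1) : ℝ) : ℂ) := by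
    rw [tsum_fintype, Nat.card_eq_fintype_card]
    push_cast
    rw [mul_sum, mul_sum]
    refine sum_congr rfl fun c _ => ?_
    rw [prod_div_distrib, prod_div_distrib, prod_const, prod_const_one, card_univ,
      Fintype.card_fin]
    ring
  rw [hval, ← hasSum_subtype_iff_indicator] at hsum
  exact (Complex.hasSum_ofReal.mp hsum).tsum_eq

/-- Theorem: ℓ¹-theta function of the Construction A lattice of the dual code. -/
theorem theta_one_constructionA_dual
    (n m : ℕ) (hn : 1 ≤ n) (hm : 2 ≤ m)
    (C : Submodule ℤ (Fin n → ZMod m))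
    (q : ℝ) (hq0 : 0 ≤ q) (hq1 : q < 1) :
    (∑' x : {x : Fin n → ℤ //
        ∀ z ∈ C, ∑ i, ((x i : ℤ) : ZMod m) * z i = 0},
        q ^ (∑ i, (x.val i).natAbs))
      = (1 - q ^ 2) ^ n / (Nat.card C : ℝ) *
        ∑' c : C, ∏ i,
          1 / (q ^ 2 - 2 * q * Real.cos (2 * Real.pi *
              ((((c : Fin n → ZMod m)) i).val : ℝ) / (m : ℝ)) + 1) :=
  theta_one_constructionA_dual_general n m hm C q hq0 hq1
end

section
/- Let C be a ℤ-submodule of (ℤ/2ℤ)^n. Then for every real q with 0 ≤ q < 1, ∑_{x ∈ Λ_A(C)} q^{‖x‖₁} = (1 − q²)^{−n} · ∑_{c ∈ C} (1 + q²)^{n − |c|} (2q)^{|c|}, where |c| = #{i : cᵢ ≠ 0} is the Hamming weight of c. -/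
/-!
Reduction mod `2` splits `Λ_A(C)` into fibres over the codewords `c ∈ C`, and the fibre over `c`
is the product of the residue classes `cᵢ + 2ℤ`. Since `q ^ ‖x‖₁ = ∏ᵢ q ^ |xᵢ|`, the sum over a
fibre factorises into two-sided geometric series: `∑_{m even} q ^ |m| = (1 + q²) / (1 - q²)` and
`∑_{m odd} q ^ |m| = 2q / (1 - q²)`. All terms are nonnegative, so the rearrangements are legitimate.
-/

theorem hasSum_pow_natAbs_mul_add {q : ℝ} (hq0 : 0 ≤ q) (hq1 : q < 1) {d r : ℕ} (hd : 0 < d)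
    (hr : r ≤ d) :
    HasSum (fun k : ℤ => q ^ (d * k + r).natAbs) ((q ^ r + q ^ (d - r)) * (1 - q ^ d)⁻¹) := by
  have hgeo : HasSum (fun n : ℕ => (q ^ d) ^ n) (1 - q ^ d)⁻¹ :=
    hasSum_geometric_of_lt_one (pow_nonneg hq0 d) (pow_lt_one₀ hq0 hq1 hd.ne')
  rw [add_mul]
  refine HasSum.of_nat_of_neg_add_one ((hgeo.mul_left (q ^ r)).congr_fun fun n => ?_)
    ((hgeo.mul_left (q ^ (d - r))).congr_fun fun n => ?_)
  · have : (d * (n : ℤ) + r).natAbs = r + d * n := by omega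
    rw [this, pow_add, pow_mul]
  · have : (d * -((n : ℤ) + 1) + r).natAbs = (d - r) + d * n := by
      rw [show (d : ℤ) * -((n : ℤ) + 1) + r = -((d - r + d * n : ℕ) : ℤ) by
        push_cast [Nat.cast_sub hr]; ring, Int.natAbs_neg, Int.natAbs_natCast]
    rw [this, pow_add, pow_mul]

def residueClassEquiv (d : ℕ) [NeZero d] (ε : ZMod d) : ℤ ≃ {m : ℤ // (m : ZMod d) = ε} where
  toFun k := ⟨d * k + ε.val, by simp⟩
  invFun m := (m - ε.val) / d
  left_inv k := by simp [NeZero.ne d]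
  right_inv m := by
    have hdvd : (d : ℤ) ∣ m - ε.val :=
      (ZMod.intCast_zmod_eq_zero_iff_dvd _ _).1 (by simp [m.2])
    apply Subtype.ext
    show (d : ℤ) * ((m - ε.val) / d) + ε.val = m
    rw [Int.mul_ediv_cancel' hdvd, sub_add_cancel]

theorem hasSum_pow_natAbs_residueClass {q : ℝ} (hq0 : 0 ≤ q) (hq1 : q < 1) (d : ℕ) [NeZero d]
    (ε : ZMod d) :
    HasSum (fun m : {m : ℤ // (m : ZMod d) = ε} => q ^ m.1.natAbs)
      ((q ^ ε.val + q ^ (d - ε.val)) * (1 - q ^ d)⁻¹) :=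
  (residueClassEquiv d ε).hasSum_iff.mp <|
    hasSum_pow_natAbs_mul_add hq0 hq1 (NeZero.pos d) (ZMod.val_lt ε).le

theorem hasSum_prod_pi_of_nonneg {n : ℕ} {α : Fin n → Type*} {f : ∀ i, α i → ℝ} {s : Fin n → ℝ}
    (hf : ∀ i, HasSum (f i) (s i)) (hf0 : ∀ i, 0 ≤ f i) :
    HasSum (fun x : ∀ i, α i => ∏ i, f i (x i)) (∏ i, s i) := by
  induction n with
  | zero => simp
  | succ n ih =>
    have htail : HasSum (fun y : ∀ i : Fin n, α i.succ => ∏ i, f i.succ (y i))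
        (∏ i : Fin n, s i.succ) :=
      ih (fun i => hf i.succ) (fun i => hf0 i.succ)
    have htail0 : 0 ≤ fun y : ∀ i : Fin n, α i.succ => ∏ i, f i.succ (y i) :=
      fun y => Finset.prod_nonneg fun i _ => hf0 i.succ (y i)
    have hhead0 : 0 ≤ f 0 := hf0 0
    have hsummable := (hf 0).summable.mul_of_nonneg htail.summable hhead0 htail0
    have hprod := (hf 0).mul htail hsummable
    rw [Fin.prod_univ_succ, ← (Fin.consEquiv α).hasSum_iff]
    convert hprod using 2 with p
    · rfl -- `HasSum.mul` is stated for the additive monoid underlying the ring structure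
    · simp [Fin.consEquiv, Fin.prod_univ_succ]

theorem prod_comp_eq_pow_hammingNorm {ι M : Type*} [Fintype ι] [CommMonoid M]
    (f : ZMod 2 → M) (c : ι → ZMod 2) :
    ∏ i, f (c i) = f 0 ^ (Fintype.card ι - hammingNorm c) * f 1 ^ hammingNorm c := by
  classical
  have hf : ∀ i, f (c i) = if c i = 0 then f 0 else f 1 := fun i => by
    generalize c i = e
    fin_cases e <;> rfl
  have hcard : (Finset.univ.filter fun i => c i = 0).card + hammingNorm c = Fintype.card ι :=
    Finset.card_filter_add_card_filter_not _
  rw [Finset.prod_congr rfl fun i _ => hf i, Finset.prod_ite, Finset.prod_const, Finset.prod_const]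
  congr
  omega

namespace ConstructionA

section Fibers

variable {ι σ : Type*} {d : ℕ} [SetLike σ (ι → ZMod d)] (S : σ)

def reduce (x : {x : ι → ℤ // (fun i => (x i : ZMod d)) ∈ S}) : S :=
  ⟨fun i => x.1 i, x.2⟩

def fiberEquiv (c : S) :
    {x // reduce S x = c} ≃ ∀ i, {m : ℤ // (m : ZMod d) = c.1 i} where
  toFun x i := ⟨x.1.1 i, congrFun (congrArg Subtype.val x.2) i⟩
  invFun y := ⟨⟨fun i => (y i).1, by convert c.2 using 1; exact funext fun i => (y i).2⟩,
    Subtype.ext <| funext fun i => (y i).2⟩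
  left_inv _ := rfl
  right_inv _ := rfl

end Fibers

theorem hasSum_pow_sum_natAbs {σ : Type*} {n d : ℕ} [NeZero d] [SetLike σ (Fin n → ZMod d)]
    (S : σ) {q : ℝ} (hq0 : 0 ≤ q) (hq1 : q < 1) :
    HasSum (fun x : {x : Fin n → ℤ // (fun i => (x i : ZMod d)) ∈ S} => q ^ ∑ i, (x.1 i).natAbs)
      (∑' c : S, ∏ i, (q ^ (c.1 i).val + q ^ (d - (c.1 i).val)) * (1 - q ^ d)⁻¹) := by
  have hfiber (c : S) : HasSum (fun x : {x // reduce S x = c} => q ^ ∑ i, (x.1.1 i).natAbs)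
      (∏ i, (q ^ (c.1 i).val + q ^ (d - (c.1 i).val)) * (1 - q ^ d)⁻¹) := by
    have hpi := hasSum_prod_pi_of_nonneg
      (fun i => hasSum_pow_natAbs_residueClass hq0 hq1 d (c.1 i)) fun i m => pow_nonneg hq0 _
    simp only [Finset.prod_pow_eq_pow_sum] at hpi
    exact ((fiberEquiv S c).hasSum_iff.mpr hpi).congr_fun fun _ => rfl
  have hnonneg (p : Σ c : S, {x // reduce S x = c}) : 0 ≤ q ^ ∑ i, (p.2.1.1 i).natAbs :=
    pow_nonneg hq0 _
  refine (Equiv.sigmaFiberEquiv (reduce S)).hasSum_iff.mp <|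
    HasSum.sigma_of_hasSum Summable.of_finite.hasSum hfiber ?_
  exact (summable_sigma_of_nonneg hnonneg).2 ⟨fun c => (hfiber c).summable, Summable.of_finite⟩

end ConstructionA

/-- Theorem: ℓ¹-theta function of a binary Construction A lattice via the
Hamming weight enumerator. -/
theorem theta_one_constructionA_binary
    (n : ℕ) (C : Submodule ℤ (Fin n → ZMod 2))
    (q : ℝ) (hq0 : 0 ≤ q) (hq1 : q < 1) :
    (∑' x : {x : Fin n → ℤ // (fun i => ((x i : ℤ) : ZMod 2)) ∈ C},
        q ^ (∑ i, (x.val i).natAbs))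
      = (1 - q ^ 2)⁻¹ ^ n *
        ∑' c : C,
          (1 + q ^ 2) ^ (n - (Finset.univ.filter
              fun i => ((c : Fin n → ZMod 2)) i ≠ 0).card) *
          (2 * q) ^ (Finset.univ.filter
              fun i => ((c : Fin n → ZMod 2)) i ≠ 0).card := by
  have hweight (c : Fin n → ZMod 2) :
      ∏ i, (q ^ (c i).val + q ^ (2 - (c i).val)) * (1 - q ^ 2)⁻¹
        = (1 - q ^ 2)⁻¹ ^ n * ((1 + q ^ 2) ^ (n - hammingNorm c) * (2 * q) ^ hammingNorm c) := by
    rw [Finset.prod_mul_distrib, prod_comp_eq_pow_hammingNorm (fun ε => q ^ ε.val + q ^ (2 - ε.val)),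
      Finset.prod_const, Finset.card_univ, Fintype.card_fin]
    simp only [ZMod.val_zero, ZMod.val_one, pow_zero, pow_one, tsub_zero, Nat.add_one_sub_one,
      inv_pow]
    ring
  rw [(ConstructionA.hasSum_pow_sum_natAbs C hq0 hq1).tsum_eq]
  simp only [hweight]
  exact tsum_mul_left
end

section
/- Let C be a ℤ-submodule of (ℤ/3ℤ)^n. Then for every real q with 0 ≤ q < 1, ∑_{x ∈ Λ_A(C)} q^{‖x‖₁} = (1 − q³)^{−n} · ∑_{c ∈ C} (1 + q³)^{n − |c|} (q + q²)^{|c|}, where |c| = #{i : cᵢ ≠ 0} is the Hamming weight of c. -/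
open scoped ENNReal
open Finset

namespace ThetaAux

/-- tsum over a pi type of a product, in `ℝ≥0∞`. -/
lemma tsum_pi_ennreal : ∀ {n : ℕ} (β : Fin n → Type) (g : ∀ i, β i → ℝ≥0∞),
    ∑' y : ∀ i, β i, ∏ i, g i (y i) = ∏ i, ∑' b, g i b := by
  intro n
  induction n with
  | zero =>
    intro β g
    rw [tsum_eq_single (default : ∀ i, β i)
      (fun b hb => absurd (Subsingleton.elim b default) hb)]
    simp
  | succ m ih =>
    intro β g
    rw [← (Fin.consEquiv β).tsum_eq (fun y => ∏ i, g i (y i))]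
    have h1 : ∀ (p : β 0 × ∀ i : Fin m, β i.succ),
        (fun y => ∏ i, g i (y i)) (Fin.consEquiv β p)
          = g 0 p.1 * ∏ i : Fin m, g i.succ (p.2 i) := by
      rintro ⟨a, y⟩
      show (∏ i, g i (Fin.cons a y i)) = _
      rw [Fin.prod_univ_succ]
      simp [Fin.cons_zero, Fin.cons_succ]
    calc ∑' p : β 0 × ∀ i : Fin m, β i.succ,
            (fun y => ∏ i, g i (y i)) (Fin.consEquiv β p)
        = ∑' (a : β 0) (y : ∀ i : Fin m, β i.succ),
            g 0 a * ∏ i : Fin m, g i.succ (y i) := by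
          rw [ENNReal.tsum_prod']
          exact tsum_congr fun a => tsum_congr fun y => h1 (a, y)
      _ = (∑' a : β 0, g 0 a) * ∏ i : Fin m, ∑' b, g i.succ b := by
          simp_rw [ENNReal.tsum_mul_left, ← ih (fun i => β i.succ) (fun i => g i.succ)]
          rw [ENNReal.tsum_mul_right]
      _ = ∏ i, ∑' b, g i b := by rw [Fin.prod_univ_succ]

variable {q : ℝ} (hq0 : 0 ≤ q) (hq1 : q < 1)

include hq0 hq1

lemma cube_lt : q ^ 3 < 1 := pow_lt_one₀ hq0 hq1 (by norm_num)

lemma summable_offset (a : ℕ) : Summable (fun j : ℕ => q ^ (a + 3 * j)) := by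
  have h : (fun j : ℕ => q ^ (a + 3 * j)) = fun j => q ^ a * (q ^ 3) ^ j := by
    funext j; rw [pow_add, pow_mul]
  rw [h]
  exact (summable_geometric_of_lt_one (by positivity) (cube_lt hq0 hq1)).mul_left _

lemma tsum_offset (a : ℕ) : ∑' j : ℕ, q ^ (a + 3 * j) = q ^ a * (1 - q ^ 3)⁻¹ := by
  have h : (fun j : ℕ => q ^ (a + 3 * j)) = fun j => q ^ a * (q ^ 3) ^ j := by
    funext j; rw [pow_add, pow_mul]
  rw [h, tsum_mul_left, tsum_geometric_of_lt_one (by positivity) (cube_lt hq0 hq1)]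

omit hq0 hq1

/-- The integers congruent to `a` mod 3. -/
noncomputable def resEquiv (a : ZMod 3) : ℤ ≃ {m : ℤ // (m : ZMod 3) = a} := by
  have hval : ((a.val : ℕ) : ZMod 3) = a := by
    rw [ZMod.natCast_val, ZMod.cast_id]
  refine Equiv.ofBijective (fun k => ⟨(a.val : ℤ) + 3 * k, ?_⟩) ⟨?_, ?_⟩
  · push_cast
    rw [hval, show (3 : ZMod 3) = 0 from rfl, zero_mul, add_zero]
  · intro k1 k2 h
    simp only [Subtype.mk.injEq] at h
    omega
  · rintro ⟨m, hm⟩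
    have h0 : ((m - (a.val : ℤ) : ℤ) : ZMod 3) = 0 := by
      push_cast
      rw [hval, hm, sub_self]

    obtain ⟨k, hk⟩ := (ZMod.intCast_zmod_eq_zero_iff_dvd _ 3).mp h0
    refine ⟨k, Subtype.ext ?_⟩
    show (a.val : ℤ) + 3 * k = m
    omega

include hq0 hq1

lemma summable_res (a : ZMod 3) :
    Summable (fun m : {m : ℤ // (m : ZMod 3) = a} => q ^ (m : ℤ).natAbs) := by
  rw [← (resEquiv a).summable_iff]
  have hr : a.val ≤ 2 := by have := a.val_lt; omega
  apply Summable.of_nat_of_neg_add_one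
  · have h : (fun k : ℕ => q ^ ((a.val : ℤ) + 3 * (k : ℤ)).natAbs)
        = fun k : ℕ => q ^ (a.val + 3 * k) := by
      funext k
      rw [show ((a.val : ℤ) + 3 * (k : ℤ)).natAbs = a.val + 3 * k by omega]
    exact h ▸ summable_offset hq0 hq1 a.val
  · have h : (fun k : ℕ => q ^ ((a.val : ℤ) + 3 * (-((k : ℤ) + 1))).natAbs)
        = fun k : ℕ => q ^ ((3 - a.val) + 3 * k) := by
      funext k
      rw [show ((a.val : ℤ) + 3 * (-((k : ℤ) + 1))).natAbs = (3 - a.val) + 3 * k by omega]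
    exact h ▸ summable_offset hq0 hq1 (3 - a.val)

lemma tsum_res (a : ZMod 3) :
    ∑' m : {m : ℤ // (m : ZMod 3) = a}, q ^ (m : ℤ).natAbs
      = (q ^ a.val + q ^ (3 - a.val)) * (1 - q ^ 3)⁻¹ := by
  rw [← (resEquiv a).tsum_eq]
  have hr : a.val ≤ 2 := by have := a.val_lt; omega
  have h1 : (fun k : ℕ => q ^ ((a.val : ℤ) + 3 * (k : ℤ)).natAbs)
      = fun k : ℕ => q ^ (a.val + 3 * k) := by
    funext k
    rw [show ((a.val : ℤ) + 3 * (k : ℤ)).natAbs = a.val + 3 * k by omega]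
  have h2 : (fun k : ℕ => q ^ ((a.val : ℤ) + 3 * (-((k : ℤ) + 1))).natAbs)
      = fun k : ℕ => q ^ ((3 - a.val) + 3 * k) := by
    funext k
    rw [show ((a.val : ℤ) + 3 * (-((k : ℤ) + 1))).natAbs = (3 - a.val) + 3 * k by omega]
  rw [tsum_of_nat_of_neg_add_one (h1 ▸ summable_offset hq0 hq1 a.val)
      (h2 ▸ summable_offset hq0 hq1 (3 - a.val))]
  show (∑' k : ℕ, q ^ ((a.val : ℤ) + 3 * (k : ℤ)).natAbs)
      + (∑' k : ℕ, q ^ ((a.val : ℤ) + 3 * (-((k : ℤ) + 1))).natAbs) = _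
  rw [h1, h2, tsum_offset hq0 hq1, tsum_offset hq0 hq1, ← add_mul]

omit hq0 hq1 in
lemma W_eval (a : ZMod 3) :
    q ^ a.val + q ^ (3 - a.val) = if a ≠ 0 then q + q ^ 2 else 1 + q ^ 3 := by
  have hv : a.val < 3 := a.val_lt
  have hz : a = 0 ↔ a.val = 0 := (ZMod.val_eq_zero a).symm
  rcases (by omega : a.val = 0 ∨ a.val = 1 ∨ a.val = 2) with h | h | h <;> rw [h]
  · rw [if_neg (not_not_intro (hz.mpr h))]
    norm_num
  · rw [if_pos (show a ≠ 0 from fun ha => by rw [hz, h] at ha; exact absurd ha one_ne_zero)]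
    show q ^ 1 + q ^ 2 = q + q ^ 2
    ring
  · rw [if_pos (show a ≠ 0 from fun ha => by rw [hz, h] at ha; norm_num at ha)]
    show q ^ 2 + q ^ 1 = q + q ^ 2
    ring

end ThetaAux

open ThetaAux

/-- Theorem: ℓ¹-theta function of a ternary Construction A lattice via the
Hamming weight enumerator. -/
theorem theta_one_constructionA_ternary
    (n : ℕ) (C : Submodule ℤ (Fin n → ZMod 3))
    (q : ℝ) (hq0 : 0 ≤ q) (hq1 : q < 1) :
    (∑' x : {x : Fin n → ℤ // (fun i => ((x i : ℤ) : ZMod 3)) ∈ C},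
        q ^ (∑ i, (x.val i).natAbs))
      = (1 - q ^ 3)⁻¹ ^ n *
        ∑' c : C,
          (1 + q ^ 3) ^ (n - (Finset.univ.filter
              fun i => ((c : Fin n → ZMod 3)) i ≠ 0).card) *
          (q + q ^ 2) ^ (Finset.univ.filter
              fun i => ((c : Fin n → ZMod 3)) i ≠ 0).card := by
  classical
  haveI : Fintype C := Fintype.ofFinite _
  set π : (Fin n → ℤ) → (Fin n → ZMod 3) := fun x i => ((x i : ℤ) : ZMod 3) with hπ
  set T := {x : Fin n → ℤ // π x ∈ C} with hT
  set Q : ℝ≥0∞ := ENNReal.ofReal q with hQ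
  -- real weights
  set W : ZMod 3 → ℝ := fun a => (q ^ a.val + q ^ (3 - a.val)) * (1 - q ^ 3)⁻¹ with hW
  have hsub : (0:ℝ) ≤ 1 - q ^ 3 := by
    have := cube_lt hq0 hq1; linarith
  have hWnn : ∀ a, 0 ≤ W a := by
    intro a
    apply mul_nonneg (by positivity) (inv_nonneg.mpr hsub)
  -- 1D result in ENNReal
  have h1d : ∀ a : ZMod 3,
      (∑' m : {m : ℤ // (m : ZMod 3) = a}, Q ^ (m : ℤ).natAbs)
        = ENNReal.ofReal (W a) := by
    intro a
    show _ = ENNReal.ofReal ((q ^ a.val + q ^ (3 - a.val)) * (1 - q ^ 3)⁻¹)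
    rw [← tsum_res hq0 hq1 a,
      ENNReal.ofReal_tsum_of_nonneg (fun m => by positivity) (summable_res hq0 hq1 a)]
    exact tsum_congr fun m => (ENNReal.ofReal_pow hq0 _).symm
  -- fiber computation
  have hfiber : ∀ c : C,
      (∑' x : {x : Fin n → ℤ // π x = (c : Fin n → ZMod 3)},
        Q ^ (∑ i, ((x : Fin n → ℤ) i).natAbs))
        = ENNReal.ofReal (∏ i, W ((c : Fin n → ZMod 3) i)) := by
    intro c
    let e : (∀ i, {m : ℤ // (m : ZMod 3) = (c : Fin n → ZMod 3) i})
        ≃ {x : Fin n → ℤ // π x = (c : Fin n → ZMod 3)} :=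
      { toFun := fun y => ⟨fun i => (y i).1, funext fun i => (y i).2⟩
        invFun := fun x => fun i => ⟨x.1 i, congrFun x.2 i⟩
        left_inv := fun y => rfl
        right_inv := fun x => rfl }
    rw [← e.tsum_eq]
    calc ∑' y : ∀ i, {m : ℤ // (m : ZMod 3) = (c : Fin n → ZMod 3) i},
            Q ^ (∑ i, (((e y) : Fin n → ℤ) i).natAbs)
        = ∑' y : ∀ i, {m : ℤ // (m : ZMod 3) = (c : Fin n → ZMod 3) i},
            ∏ i, Q ^ ((y i : ℤ)).natAbs := by
          refine tsum_congr fun y => ?_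
          rw [Finset.prod_pow_eq_pow_sum]
          rfl
      _ = ∏ i, ∑' m : {m : ℤ // (m : ZMod 3) = (c : Fin n → ZMod 3) i},
            Q ^ (m : ℤ).natAbs :=
          tsum_pi_ennreal (fun i => {m : ℤ // (m : ZMod 3) = (c : Fin n → ZMod 3) i})
            (fun i m => Q ^ (m : ℤ).natAbs)
      _ = ∏ i, ENNReal.ofReal (W ((c : Fin n → ZMod 3) i)) :=
          Finset.prod_congr rfl fun i _ => h1d _
      _ = ENNReal.ofReal (∏ i, W ((c : Fin n → ZMod 3) i)) :=
          (ENNReal.ofReal_prod_of_nonneg fun i _ => hWnn _).symm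
  -- sigma decomposition
  have hsig : (∑' x : T, Q ^ (∑ i, ((x : Fin n → ℤ) i).natAbs))
      = ∑' c : C, ∑' x : {x : Fin n → ℤ // π x = (c : Fin n → ZMod 3)},
          Q ^ (∑ i, ((x : Fin n → ℤ) i).natAbs) := by
    let e4 : (Σ c : C, {x : Fin n → ℤ // π x = (c : Fin n → ZMod 3)}) ≃ T :=
      { toFun := fun p => ⟨p.2.1, by rw [p.2.2]; exact p.1.2⟩
        invFun := fun x => ⟨⟨π x.1, x.2⟩, ⟨x.1, rfl⟩⟩
        left_inv := by
          rintro ⟨⟨cv, hc⟩, ⟨xv, hx⟩⟩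
          dsimp only at hx
          subst hx
          rfl
        right_inv := fun x => rfl }
    rw [← e4.tsum_eq, ENNReal.tsum_sigma']
    exact tsum_congr fun c => tsum_congr fun x => rfl
  -- assemble ENNReal identity
  set R0 : ℝ := ∑ c : C, ∏ i, W ((c : Fin n → ZMod 3) i) with hR0
  have hENN : (∑' x : T, Q ^ (∑ i, ((x : Fin n → ℤ) i).natAbs))
      = ENNReal.ofReal R0 := by
    rw [hsig]
    simp_rw [hfiber]
    rw [tsum_fintype, hR0, ENNReal.ofReal_sum_of_nonneg
      (fun c _ => Finset.prod_nonneg fun i _ => hWnn _)]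
  -- transfer to ℝ
  have hreal : (∑' x : T, q ^ (∑ i, ((x : Fin n → ℤ) i).natAbs)) = R0 := by
    have hterm : ∀ x : T, q ^ (∑ i, ((x : Fin n → ℤ) i).natAbs)
        = (Q ^ (∑ i, ((x : Fin n → ℤ) i).natAbs)).toReal := by
      intro x
      rw [ENNReal.toReal_pow, hQ, ENNReal.toReal_ofReal hq0]
    calc (∑' x : T, q ^ (∑ i, ((x : Fin n → ℤ) i).natAbs))
        = ∑' x : T, (Q ^ (∑ i, ((x : Fin n → ℤ) i).natAbs)).toReal :=
          tsum_congr hterm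
      _ = (∑' x : T, Q ^ (∑ i, ((x : Fin n → ℤ) i).natAbs)).toReal :=
          (ENNReal.tsum_toReal_eq fun x => ENNReal.pow_ne_top ENNReal.ofReal_ne_top).symm
      _ = R0 := by
          rw [hENN, ENNReal.toReal_ofReal]
          exact Finset.sum_nonneg fun c _ => Finset.prod_nonneg fun i _ => hWnn _
  rw [show (∑' x : {x : Fin n → ℤ // (fun i => ((x i : ℤ) : ZMod 3)) ∈ C},
        q ^ (∑ i, (x.val i).natAbs))
      = ∑' x : T, q ^ (∑ i, ((x : Fin n → ℤ) i).natAbs) from rfl, hreal, hR0]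
  -- final algebraic identity
  rw [tsum_fintype, Finset.mul_sum]
  refine Finset.sum_congr rfl fun c _ => ?_
  have hprod : ∏ i, W ((c : Fin n → ZMod 3) i)
      = (∏ i, (if (c : Fin n → ZMod 3) i ≠ 0 then q + q ^ 2 else 1 + q ^ 3))
        * ((1 - q ^ 3)⁻¹) ^ n := by
    simp only [hW]
    rw [Finset.prod_mul_distrib, Finset.prod_const, Finset.card_univ, Fintype.card_fin]
    congr 1
    exact Finset.prod_congr rfl fun i _ => W_eval _
  rw [hprod, Finset.prod_ite, Finset.prod_const, Finset.prod_const]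
  have hcard : (Finset.univ.filter fun i => ¬ ((c : Fin n → ZMod 3) i ≠ 0)).card
      = n - (Finset.univ.filter fun i => (c : Fin n → ZMod 3) i ≠ 0).card := by
    have := Finset.card_filter_add_card_filter_not
      (s := (Finset.univ : Finset (Fin n))) (p := fun i => (c : Fin n → ZMod 3) i ≠ 0)
    rw [Finset.card_univ, Fintype.card_fin] at this
    omega
  rw [hcard]
  ring
end

section
/- Let s > 0 be a real number and let f : ℝ → ℝ be defined by f(x) = 1/(1 + s x²). Then the Fourier transform of f is given by f̂(ξ) = (π/√s) · e^{−2π|ξ|/√s} for all ξ ∈ ℝ. -/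
/-!
Splitting the integral at `0` turns the Fourier transform of `x ↦ e^{-a|x|}` into two
exponential integrals, giving `2a / (a² + 4π²ξ²)`. For `a = 2π/√s` this is `√s/π` times
`1/(1 + s ξ²)`, so the claim is Fourier inversion for the continuous, integrable, even
function `e^{-a|x|}`.
-/

open FourierTransform Real MeasureTheory Set Complex

section FourierInversion

variable {V E : Type*} [NormedAddCommGroup V] [InnerProductSpace ℝ V] [MeasurableSpace V]
  [BorelSpace V] [FiniteDimensional ℝ V] [NormedAddCommGroup E] [NormedSpace ℂ E]

theorem Real.fourier_const_smul (c : ℂ) (f : V → E) : 𝓕 (c • f) = c • 𝓕 f := by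
  ext w
  simp_rw [Pi.smul_apply, Real.fourier_eq, Pi.smul_apply, smul_comm _ c, integral_smul]

theorem MeasureTheory.Integrable.fourier_fourier_eq_neg [CompleteSpace E] {f : V → E}
    (hf : Integrable f) (h'f : Integrable (𝓕 f)) {v : V} (hv : ContinuousAt f (-v)) :
    𝓕 (𝓕 f) v = f (-v) := by
  rw [← hf.fourierInv_fourier_eq h'f hv, Real.fourierInv_eq_fourier_neg, neg_neg]

end FourierInversion

section TwoSidedLaplace

lemma cexp_mul_mul_cexp_neg_mul_abs_eqOn_Iic (a : ℝ) (c : ℂ) :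
    EqOn (fun x : ℝ => cexp (c * x) * cexp (-(a * |x|))) (fun x : ℝ => cexp ((c + a) * x))
      (Iic 0) := fun x hx => by
  simp only [abs_of_nonpos (mem_Iic.mp hx), ← Complex.exp_add]
  push_cast
  ring_nf

lemma cexp_mul_mul_cexp_neg_mul_abs_eqOn_Ioi (a : ℝ) (c : ℂ) :
    EqOn (fun x : ℝ => cexp (c * x) * cexp (-(a * |x|))) (fun x : ℝ => cexp ((c - a) * x))
      (Ioi 0) := fun x hx => by
  simp only [abs_of_pos (mem_Ioi.mp hx), ← Complex.exp_add]
  ring_nf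

variable {a : ℝ} {c : ℂ}

lemma integrable_cexp_mul_mul_cexp_neg_mul_abs (h : |c.re| < a) :
    Integrable fun x : ℝ => cexp (c * x) * cexp (-(a * |x|)) := by
  obtain ⟨hlo, hhi⟩ := abs_lt.mp h
  rw [← integrableOn_univ, ← Iic_union_Ioi (a := 0), integrableOn_union]
  exact ⟨(integrableOn_exp_mul_complex_Iic (by rw [add_re, ofReal_re]; linarith) 0).congr_fun
      (cexp_mul_mul_cexp_neg_mul_abs_eqOn_Iic a c).symm measurableSet_Iic,
    (integrableOn_exp_mul_complex_Ioi (by rw [sub_re, ofReal_re]; linarith) 0).congr_fun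
      (cexp_mul_mul_cexp_neg_mul_abs_eqOn_Ioi a c).symm measurableSet_Ioi⟩

lemma integral_cexp_mul_mul_cexp_neg_mul_abs (h : |c.re| < a) :
    ∫ x : ℝ, cexp (c * x) * cexp (-(a * |x|)) = 2 * a / (a ^ 2 - c ^ 2) := by
  obtain ⟨hlo, hhi⟩ := abs_lt.mp h
  have hplus : 0 < (c + a).re := by rw [add_re, ofReal_re]; linarith
  have hminus : (c - a).re < 0 := by rw [sub_re, ofReal_re]; linarith
  have hint := integrable_cexp_mul_mul_cexp_neg_mul_abs h
  rw [← intervalIntegral.integral_Iic_add_Ioi hint.integrableOn hint.integrableOn,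
    setIntegral_congr_fun measurableSet_Iic (cexp_mul_mul_cexp_neg_mul_abs_eqOn_Iic a c),
    setIntegral_congr_fun measurableSet_Ioi (cexp_mul_mul_cexp_neg_mul_abs_eqOn_Ioi a c),
    integral_exp_mul_complex_Iic hplus, integral_exp_mul_complex_Ioi hminus]
  have hplus' : c + a ≠ 0 := ne_of_apply_ne re (by rw [zero_re]; exact hplus.ne')
  have hminus' : c - a ≠ 0 := ne_of_apply_ne re (by rw [zero_re]; exact hminus.ne)
  have hsq : (a : ℂ) ^ 2 - c ^ 2 ≠ 0 := by
    rw [show (a : ℂ) ^ 2 - c ^ 2 = -((c + a) * (c - a)) by ring]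
    exact neg_ne_zero.mpr (mul_ne_zero hplus' hminus')
  simp only [ofReal_zero, mul_zero, Complex.exp_zero]
  field_simp
  ring

end TwoSidedLaplace

theorem fourier_cexp_neg_mul_abs {a : ℝ} (ha : 0 < a) (ξ : ℝ) :
    𝓕 (fun x : ℝ => cexp (-(a * |x|))) ξ = ((2 * a / (a ^ 2 + (2 * π * ξ) ^ 2) : ℝ) : ℂ) := by
  have h := integral_cexp_mul_mul_cexp_neg_mul_abs (c := -2 * π * ξ * I)
    (by simpa using ha)
  rw [Real.fourier_real_eq_integral_exp_smul]
  refine (integral_congr_ae (ae_of_all _ fun x => ?_)).trans (h.trans ?_)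
  · simp only [smul_eq_mul]
    push_cast
    ring_nf
  · push_cast
    rw [mul_pow, I_sq]
    ring

lemma integrable_inv_one_add_mul_sq {s : ℝ} (hs : 0 < s) :
    Integrable fun x : ℝ => (1 + s * x ^ 2)⁻¹ := by
  have h := integrable_inv_one_add_sq.comp_mul_left' (Real.sqrt_pos.2 hs).ne'
  simpa only [Function.comp_def, mul_pow, Real.sq_sqrt hs.le] using h

lemma integrable_cexp_neg_mul_abs {a : ℝ} (ha : 0 < a) :
    Integrable fun x : ℝ => cexp (-(a * |x|)) := by
  simpa using integrable_cexp_mul_mul_cexp_neg_mul_abs (c := 0) (by simpa using ha)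

lemma one_div_one_add_mul_sq_eq_smul_fourier {s : ℝ} (hs : 0 < s) :
    (fun x : ℝ => (1 / (1 + s * x ^ 2) : ℂ))
      = ((π / √s : ℝ) : ℂ) • 𝓕 (fun x : ℝ => cexp (-((2 * π / √s : ℝ) * |x|))) := by
  ext x
  have hreal : π / √s * (2 * (2 * π / √s) / ((2 * π / √s) ^ 2 + (2 * π * x) ^ 2))
      = 1 / (1 + s * x ^ 2) := by
    field_simp
    rw [Real.sq_sqrt hs.le]
    ring
  rw [Pi.smul_apply, fourier_cexp_neg_mul_abs (by positivity), smul_eq_mul, ← ofReal_mul,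
    hreal]
  push_cast
  rfl

/-- Lemma: the Fourier transform of `x ↦ 1/(1 + s x²)` is
`ξ ↦ (π/√s) e^{-2π|ξ|/√s}`. -/
theorem fourier_one_div_one_add_sq (s : ℝ) (hs : 0 < s) (ξ : ℝ) :
    𝓕 (fun x : ℝ => (1 / (1 + s * x ^ 2) : ℂ)) ξ
      = ((Real.pi / Real.sqrt s : ℝ) : ℂ) *
        Complex.exp (-(2 * Real.pi * |ξ| / Real.sqrt s)) := by
  have ha : 0 < 2 * π / √s := div_pos two_pi_pos (Real.sqrt_pos.2 hs)
  set g : ℝ → ℂ := fun x => cexp (-((2 * π / √s : ℝ) * |x|))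
  have hg : Integrable g := integrable_cexp_neg_mul_abs ha
  have hFg : Integrable (𝓕 g) := by
    rw [← integrable_smul_iff (ofReal_ne_zero.2 (by positivity : π / √s ≠ 0)),
      ← one_div_one_add_mul_sq_eq_smul_fourier hs]
    exact (integrable_inv_one_add_mul_sq hs).ofReal.congr (ae_of_all _ fun x => by simp)
  rw [one_div_one_add_mul_sq_eq_smul_fourier hs, Real.fourier_const_smul, Pi.smul_apply,
    hg.fourier_fourier_eq_neg hFg (by fun_prop), smul_eq_mul]
  simp only [g, abs_neg]
  push_cast
  ring_nf
end

section
/- Let n ≥ 1 and let α₁, …, αₙ be positive real numbers with α₁·α₂ ⋯ αₙ = 1. Then for every real q with 0 < q < 1, ((1+q)/(1−q))^n ≤ ∏_{i=1}^n (1 + q^{αᵢ})/(1 − q^{αᵢ}), i.e. Θ¹_{ℤ^n}(q) ≤ Θ¹_{α₁ℤ ⊕ ⋯ ⊕ αₙℤ}(q); moreover the inequality is strict unless αᵢ = 1 for all i. -/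
/-!
Write `αᵢ = exp tᵢ`, so that the constraint becomes `∑ tᵢ = 0` and the logarithm of the product
is `∑ F(tᵢ)` with `F(t) = log ((1 + q^{eᵗ}) / (1 - q^{eᵗ}))`. With `u = eᵗ log (1/q)` one finds
`F'(t) = -u / sinh u`, which is strictly increasing in `t` because `u / sinh u` decreases on
`(0, ∞)`. Hence `F` is strictly convex, and Jensen's inequality with equal weights gives
`∑ F(tᵢ) ≥ n F(0)`, with equality only when all `tᵢ = 0`.
-/

open Real Set

theorem Real.sinh_lt_mul_cosh {x : ℝ} (hx : 0 < x) : sinh x < x * cosh x := by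
  have hmono : StrictMonoOn (fun y => y * cosh y - sinh y) (Ici 0) := by
    refine strictMonoOn_of_deriv_pos (convex_Ici 0) (by fun_prop) fun y hy => ?_
    rw [interior_Ici] at hy
    have hderiv : HasDerivAt (fun y => y * cosh y - sinh y) (1 * cosh y + y * sinh y - cosh y) y :=
      ((hasDerivAt_id y).mul (hasDerivAt_cosh y)).sub (hasDerivAt_sinh y)
    rw [hderiv.deriv]
    nlinarith [mul_pos hy (sinh_pos_iff.2 hy)]
  simpa using hmono self_mem_Ici hx.le hx

theorem Real.strictAntiOn_div_sinh : StrictAntiOn (fun u => u / sinh u) (Ioi 0) := by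
  refine strictAntiOn_of_deriv_neg (convex_Ioi 0)
    (continuousOn_id.div continuous_sinh.continuousOn fun u hu => (sinh_pos_iff.2 hu).ne')
    fun u hu => ?_
  rw [interior_Ioi] at hu
  have hsinh := sinh_pos_iff.2 hu
  have hderiv : HasDerivAt (fun u => u / sinh u) ((1 * sinh u - u * cosh u) / sinh u ^ 2) u :=
    (hasDerivAt_id u).div (hasDerivAt_sinh u) hsinh.ne'
  rw [hderiv.deriv]
  exact div_neg_of_neg_of_pos (by simpa using sinh_lt_mul_cosh hu) (by positivity)

/-- `log Θ¹_{e^t ℤ}(q)`. -/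
noncomputable def logThetaOneExp (q t : ℝ) : ℝ :=
  log ((1 + q ^ exp t) / (1 - q ^ exp t))

theorem exp_logThetaOneExp {q : ℝ} (hq0 : 0 < q) (hq1 : q < 1) (t : ℝ) :
    exp (logThetaOneExp q t) = (1 + q ^ exp t) / (1 - q ^ exp t) := by
  have hpow : q ^ exp t < 1 := rpow_lt_one hq0.le hq1 (exp_pos t)
  exact exp_log (div_pos (by positivity) (by linarith))

theorem hasDerivAt_logThetaOneExp {q : ℝ} (hq0 : 0 < q) (hq1 : q < 1) (t : ℝ) :
    HasDerivAt (logThetaOneExp q) (-(-log q * exp t / sinh (-log q * exp t))) t := by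
  set u := -log q * exp t with hu
  clear_value u
  have hu0 : 0 < u := hu ▸ mul_pos (neg_pos.2 (log_neg hq0 hq1)) (exp_pos t)
  have hx : q ^ exp t = exp (-u) := by rw [rpow_def_of_pos hq0, hu]; ring_nf
  have hpow : HasDerivAt (fun t => q ^ exp t) (log q * exp t * q ^ exp t) t :=
    (hasDerivAt_exp t).const_rpow hq0
  have hx1 : exp (-u) < 1 := exp_lt_one_iff.2 (by linarith)
  have hratio : HasDerivAt (fun t => (1 + q ^ exp t) / (1 - q ^ exp t)) _ t :=
    ((hasDerivAt_const t 1).add hpow).div ((hasDerivAt_const t 1).sub hpow)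
      (by rw [hx]; linarith)
  refine (hratio.log (by rw [hx]; exact (div_pos (by positivity) (by linarith)).ne')).congr_deriv ?_
  -- with `x = e^{-u}` the derivative is `-2ux / (1 - x²)`, and `2x / (1 - x²) = 1 / sinh u`
  have hlog : log q * exp t = -u := by rw [hu]; ring
  have hexp : exp u * exp (-u) = 1 := by rw [← exp_add]; simp
  have h1 : 0 < 1 - exp (-u) := by linarith
  have h2 : 0 < exp u - exp (-u) := by linarith [exp_lt_exp.2 (show -u < u by linarith)]
  simp only [Pi.add_apply]
  rw [hx, hlog, sinh_eq]
  field_simp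
  linear_combination -2 * u * hexp

theorem strictConvexOn_logThetaOneExp {q : ℝ} (hq0 : 0 < q) (hq1 : q < 1) :
    StrictConvexOn ℝ univ (logThetaOneExp q) := by
  have hderiv := hasDerivAt_logThetaOneExp hq0 hq1
  refine StrictMono.strictConvexOn_univ_of_deriv
    (continuous_iff_continuousAt.2 fun t => (hderiv t).continuousAt) fun s t hst => ?_
  have hlogq : 0 < -log q := neg_pos.2 (log_neg hq0 hq1)
  simp only [(hderiv _).deriv, neg_lt_neg_iff]
  exact strictAntiOn_div_sinh (mul_pos hlogq (exp_pos s)) (mul_pos hlogq (exp_pos t))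
    (mul_lt_mul_of_pos_left (exp_lt_exp.2 hst) hlogq)

section Jensen

variable {ι E : Type*} [Fintype ι] [AddCommGroup E] [Module ℝ E] {s : Set E} {f : E → ℝ}
  {p : ι → E}

theorem ConvexOn.card_mul_map_zero_le_sum (hf : ConvexOn ℝ s f) (hp : ∀ i, p i ∈ s)
    (hsum : ∑ i, p i = 0) : Fintype.card ι * f 0 ≤ ∑ i, f (p i) := by
  rcases isEmpty_or_nonempty ι with hι | hι
  · simp
  have hcard : (0 : ℝ) < Fintype.card ι := by exact_mod_cast Fintype.card_pos
  have hw : ∑ _i : ι, (Fintype.card ι : ℝ)⁻¹ = 1 := by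
    simp [Finset.card_univ, hcard.ne']
  have := hf.map_sum_le (fun _ _ => (inv_pos.2 hcard).le) hw fun i _ => hp i
  rw [← Finset.smul_sum, hsum, smul_zero, ← Finset.smul_sum, smul_eq_mul] at this
  rwa [le_inv_mul_iff₀ hcard] at this

theorem StrictConvexOn.card_mul_map_zero_lt_sum (hf : StrictConvexOn ℝ s f) (hp : ∀ i, p i ∈ s)
    (hsum : ∑ i, p i = 0) (hne : ∃ i, p i ≠ 0) : Fintype.card ι * f 0 < ∑ i, f (p i) := by
  obtain ⟨i, hi⟩ := hne
  have hcard : (0 : ℝ) < Fintype.card ι := by exact_mod_cast Fintype.card_pos_iff.2 ⟨i⟩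
  have hw : ∑ _i : ι, (Fintype.card ι : ℝ)⁻¹ = 1 := by
    simp [Finset.card_univ, hcard.ne']
  have := (hf.map_sum_lt_iff_of_pos' (fun _ _ => inv_pos.2 hcard) hw fun i _ => hp i).2
  rw [← Finset.smul_sum, hsum, smul_zero, ← Finset.smul_sum, smul_eq_mul,
    lt_inv_mul_iff₀ hcard] at this
  exact this ⟨i, Finset.mem_univ i, hi⟩

end Jensen

theorem theta_one_orthogonal_minimal_general
    (n : ℕ) (α : Fin n → ℝ) (hα : ∀ i, 0 < α i)
    (hprod : ∏ i, α i = 1) (q : ℝ) (hq0 : 0 < q) (hq1 : q < 1) :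
    ((1 + q) / (1 - q)) ^ n ≤ ∏ i, (1 + q ^ (α i)) / (1 - q ^ (α i)) ∧
    ((∃ i, α i ≠ 1) →
      ((1 + q) / (1 - q)) ^ n < ∏ i, (1 + q ^ (α i)) / (1 - q ^ (α i))) := by
  have hF := strictConvexOn_logThetaOneExp hq0 hq1
  have hsum : ∑ i, log (α i) = 0 := by
    rw [← log_prod fun i _ => (hα i).ne', hprod, log_one]
  have hlhs : ((1 + q) / (1 - q)) ^ n = exp (Fintype.card (Fin n) * logThetaOneExp q 0) := by
    rw [Fintype.card_fin, exp_nat_mul, exp_logThetaOneExp hq0 hq1, exp_zero, rpow_one]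
  have hrhs : ∏ i, (1 + q ^ (α i)) / (1 - q ^ (α i))
      = exp (∑ i, logThetaOneExp q (log (α i))) := by
    simp only [exp_sum, exp_logThetaOneExp hq0 hq1, exp_log (hα _)]
  rw [hlhs, hrhs, exp_le_exp, exp_lt_exp]
  refine ⟨hF.convexOn.card_mul_map_zero_le_sum (fun _ => mem_univ _) hsum, ?_⟩
  rintro ⟨i, hi⟩
  exact hF.card_mul_map_zero_lt_sum (fun _ => mem_univ _) hsum
    ⟨i, log_ne_zero_of_pos_of_ne_one (hα i) hi⟩

/-- Proposition: among orthogonal lattices `α₁ℤ ⊕ ⋯ ⊕ αₙℤ` of unit volume,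
`ℤⁿ` minimizes the ℓ¹-theta function, strictly unless all `αᵢ = 1`. -/
theorem theta_one_orthogonal_minimal
    (n : ℕ) (hn : 1 ≤ n) (α : Fin n → ℝ) (hα : ∀ i, 0 < α i)
    (hprod : ∏ i, α i = 1) (q : ℝ) (hq0 : 0 < q) (hq1 : q < 1) :
    ((1 + q) / (1 - q)) ^ n ≤ ∏ i, (1 + q ^ (α i)) / (1 - q ^ (α i)) ∧
    ((∃ i, α i ≠ 1) →
      ((1 + q) / (1 - q)) ^ n < ∏ i, (1 + q ^ (α i)) / (1 - q ^ (α i))) :=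
  theta_one_orthogonal_minimal_general n α hα hprod q hq0 hq1
end

section
/- For all real α ≥ 1 and y > 0, coth(α y) · coth(y/α) ≥ coth(y)², with equality if and only if α = 1. -/
/-!
Put `a = α y` and `b = y / α`, so that `a b = y²` and `(a + b)² = (a - b)² + (2y)²`. By the
product-to-sum formulas, `coth a coth b - coth² y` has the sign of
`cosh (a - b) cosh (2y) - cosh (a + b)`. Writing `d = a - b`, `s = 2y`, the inequality
`cosh √(d² + s²) ≤ cosh d cosh s` is Jensen's inequality for `x ↦ cosh √x` at `(d - s)²`
and `(d + s)²`, whose mean is `d² + s²` and whose `cosh √·`-values average to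
`cosh d cosh s`. That function is strictly convex because its derivative `sinh √x / (2 √x)`
increases, `sinh t / t` being a secant slope of the convex function `sinh`; strictness gives
the equality case.
-/

/-- The real hyperbolic cotangent. -/
noncomputable def coth (t : ℝ) : ℝ := Real.cosh t / Real.sinh t

open Real Set

theorem strictConvexOn_sinh : StrictConvexOn ℝ (Ici 0) sinh :=
  StrictMonoOn.strictConvexOn_of_deriv (convex_Ici 0) continuous_sinh.continuousOn <| by
    simpa only [Real.deriv_sinh] using cosh_strictMonoOn.mono interior_subset

theorem strictMonoOn_sinh_div_self : StrictMonoOn (fun t => sinh t / t) (Ioi 0) := by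
  intro x hx y hy hxy
  simpa using strictConvexOn_sinh.secant_strict_mono self_mem_Ici
    (Ioi_subset_Ici_self hx) (Ioi_subset_Ici_self hy) hx.ne' hy.ne' hxy

theorem hasDerivAt_cosh_sqrt {x : ℝ} (hx : 0 < x) :
    HasDerivAt (fun x => cosh √x) (sinh √x / √x / 2) x := by
  convert (hasDerivAt_sqrt hx.ne').cosh using 1
  field_simp

theorem strictConvexOn_cosh_sqrt : StrictConvexOn ℝ (Ici 0) (fun x => cosh √x) := by
  refine StrictMonoOn.strictConvexOn_of_deriv (convex_Ici 0) (by fun_prop) ?_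
  rw [interior_Ici]
  intro x hx y hy hxy
  rw [(hasDerivAt_cosh_sqrt hx).deriv, (hasDerivAt_cosh_sqrt hy).deriv]
  gcongr ?_ / 2
  exact strictMonoOn_sinh_div_self (sqrt_pos.2 hx) (sqrt_pos.2 hy) (sqrt_lt_sqrt hx.le hxy)

theorem cosh_mul_cosh_eq_midpoint (d s : ℝ) :
    cosh d * cosh s =
      (1 / 2 : ℝ) • cosh √((d - s) ^ 2) + (1 / 2 : ℝ) • cosh √((d + s) ^ 2) := by
  simp only [sqrt_sq_eq_abs, cosh_abs, cosh_add, cosh_sub, smul_eq_mul]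
  ring

theorem cosh_eq_cosh_sqrt_midpoint {q d s : ℝ} (h : q ^ 2 = d ^ 2 + s ^ 2) :
    cosh q = cosh √((1 / 2 : ℝ) • (d - s) ^ 2 + (1 / 2 : ℝ) • (d + s) ^ 2) := by
  rw [← cosh_abs, ← sqrt_sq_eq_abs, h, smul_eq_mul, smul_eq_mul]
  ring_nf

theorem cosh_le_cosh_mul_cosh {q d s : ℝ} (h : q ^ 2 = d ^ 2 + s ^ 2) :
    cosh q ≤ cosh d * cosh s := by
  rw [cosh_eq_cosh_sqrt_midpoint h, cosh_mul_cosh_eq_midpoint]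
  exact strictConvexOn_cosh_sqrt.convexOn.2 (mem_Ici.2 (sq_nonneg _)) (mem_Ici.2 (sq_nonneg _))
    (by norm_num) (by norm_num) (by norm_num)

theorem cosh_lt_cosh_mul_cosh {q d s : ℝ} (hd : d ≠ 0) (hs : s ≠ 0)
    (h : q ^ 2 = d ^ 2 + s ^ 2) : cosh q < cosh d * cosh s := by
  have hne : (d - s) ^ 2 ≠ (d + s) ^ 2 := by
    intro heq
    exact mul_ne_zero hd hs (by linear_combination -heq / 4)
  rw [cosh_eq_cosh_sqrt_midpoint h, cosh_mul_cosh_eq_midpoint]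
  exact strictConvexOn_cosh_sqrt.2 (mem_Ici.2 (sq_nonneg _)) (mem_Ici.2 (sq_nonneg _)) hne
    (by norm_num) (by norm_num) (by norm_num)

theorem coth_mul_coth_sub_coth_sq {a b y : ℝ} (ha : a ≠ 0) (hb : b ≠ 0) (hy : y ≠ 0) :
    coth a * coth b - coth y ^ 2 =
      (cosh (a - b) * cosh (2 * y) - cosh (a + b)) / (2 * sinh a * sinh b * sinh y ^ 2) := by
  have := sinh_ne_zero.2 ha
  have := sinh_ne_zero.2 hb
  have := sinh_ne_zero.2 hy
  unfold coth
  rw [cosh_add, cosh_sub, cosh_two_mul]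
  field_simp
  linear_combination -(cosh a * cosh b + sinh a * sinh b) * cosh_sq y

theorem coth_sq_le_coth_mul_coth {a b y : ℝ} (ha : 0 < a) (hb : 0 < b) (h : a * b = y ^ 2) :
    coth y ^ 2 ≤ coth a * coth b := by
  have hy : y ≠ 0 := by rintro rfl; nlinarith [mul_pos ha hb]
  have := sinh_pos_iff.2 ha
  have := sinh_pos_iff.2 hb
  have := sinh_ne_zero.2 hy
  rw [← sub_nonneg, coth_mul_coth_sub_coth_sq ha.ne' hb.ne' hy]
  exact div_nonneg (sub_nonneg.2 (cosh_le_cosh_mul_cosh (by linear_combination 4 * h)))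
    (by positivity)

theorem coth_sq_lt_coth_mul_coth {a b y : ℝ} (ha : 0 < a) (hb : 0 < b) (hab : a ≠ b)
    (h : a * b = y ^ 2) : coth y ^ 2 < coth a * coth b := by
  have hy : y ≠ 0 := by rintro rfl; nlinarith [mul_pos ha hb]
  have := sinh_pos_iff.2 ha
  have := sinh_pos_iff.2 hb
  have := sinh_ne_zero.2 hy
  rw [← sub_pos, coth_mul_coth_sub_coth_sq ha.ne' hb.ne' hy]
  have hcosh : cosh (a + b) < cosh (a - b) * cosh (2 * y) :=
    cosh_lt_cosh_mul_cosh (sub_ne_zero.2 hab) (mul_ne_zero two_ne_zero hy)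
      (by linear_combination 4 * h)
  exact div_pos (sub_pos.2 hcosh) (by positivity)

/-- Lemma: `coth(αy)·coth(y/α) ≥ coth(y)²` for `α ≥ 1`, `y > 0`,
with equality iff `α = 1`. -/
theorem coth_mul_coth_div_ge (α y : ℝ) (hα : 1 ≤ α) (hy : 0 < y) :
    coth y ^ 2 ≤ coth (α * y) * coth (y / α) ∧
    (coth (α * y) * coth (y / α) = coth y ^ 2 ↔ α = 1) := by
  have hα₀ : 0 < α := by linarith
  have hmul : α * y * (y / α) = y ^ 2 := by field_simp
  refine ⟨coth_sq_le_coth_mul_coth (by positivity) (by positivity) hmul, fun heq => ?_, ?_⟩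
  · by_contra hα_ne
    have hα₁ : 1 < α := lt_of_le_of_ne hα (Ne.symm hα_ne)
    have hne : α * y ≠ y / α :=
      ((div_lt_self hy hα₁).trans (lt_mul_of_one_lt_left hy hα₁)).ne'
    exact (coth_sq_lt_coth_mul_coth (by positivity) (by positivity) hne hmul).ne' heq
  · rintro rfl
    rw [one_mul, div_one, sq]
end

section
/- Let Dₙ = {x ∈ ℤ^n : ∑_{i=1}^n xᵢ ≡ 0 (mod 2)}. Then for every real q with 0 ≤ q < 1, ∑_{x ∈ Dₙ} q^{‖x‖₁} = ((1+q)^{2n} + (1−q)^{2n}) / (2 (1−q²)^n), where ‖x‖₁ = ∑_{i=1}^n |xᵢ| and the series converges absolutely. -/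
lemma natAbs_neg_succ (n : ℕ) : ((-(n + 1) : ℤ)).natAbs = n + 1 := by omega

lemma int_summable {r : ℝ} (hr : |r| < 1) :
    Summable (fun k : ℤ => ‖r ^ k.natAbs‖) := by
  have h1 : Summable (fun n : ℕ => |r| ^ n) :=
    summable_geometric_of_lt_one (abs_nonneg r) hr
  have h2 : Summable (fun n : ℕ => |r| ^ (n + 1)) := by
    simpa [pow_succ, mul_comm] using h1.mul_left |r|
  apply Summable.of_nat_of_neg_add_one
  · simpa [abs_pow] using h1
  · exact h2.congr fun n => by rw [natAbs_neg_succ, norm_pow, Real.norm_eq_abs]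

lemma int_tsum {r : ℝ} (hr : |r| < 1) :
    ∑' k : ℤ, r ^ k.natAbs = (1 + r) / (1 - r) := by
  have h1 : Summable (fun n : ℕ => r ^ n) :=
    summable_geometric_of_norm_lt_one (by simpa using hr)
  have h2 : Summable (fun n : ℕ => r ^ (n + 1)) := by
    simpa [pow_succ, mul_comm] using h1.mul_left r
  have hne : (1 : ℝ) - r ≠ 0 := by
    have := abs_lt.mp hr; intro h; nlinarith [this.2]
  rw [tsum_of_nat_of_neg_add_one (by simpa using h1)
      (h2.congr fun n => by rw [natAbs_neg_succ])]
  have hg : ∑' n : ℕ, r ^ n = (1 - r)⁻¹ :=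
    tsum_geometric_of_norm_lt_one (by simpa using hr)
  have e1 : (fun n : ℤ => r ^ n.natAbs) ∘ (Nat.cast) = fun n : ℕ => r ^ n := by
    funext n; simp
  calc (∑' n : ℕ, r ^ ((n : ℤ)).natAbs) + ∑' n : ℕ, r ^ ((-(n + 1) : ℤ)).natAbs
      = (∑' n : ℕ, r ^ n) + ∑' n : ℕ, r ^ (n + 1) := by
        exact congrArg₂ (· + ·) (tsum_congr fun n => by simp)
          (tsum_congr fun n => by rw [natAbs_neg_succ])
    _ = (1 - r)⁻¹ + r * (1 - r)⁻¹ := by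
        rw [hg]; congr 1
        rw [← hg, ← tsum_mul_left]
        exact tsum_congr fun n => by ring
    _ = (1 + r) / (1 - r) := by rw [div_eq_mul_inv]; ring

lemma pi_prod (f : ℤ → ℝ) (hf : Summable fun k => ‖f k‖) :
    ∀ n : ℕ, Summable (fun x : Fin n → ℤ => ‖∏ i, f (x i)‖) ∧
      ∑' x : Fin n → ℤ, ∏ i, f (x i) = (∑' k, f k) ^ n := by
  intro n
  induction n with
  | zero =>
    constructor
    · exact .of_finite
    · haveI : Unique (Fin 0 → ℤ) := ⟨⟨fun i => i.elim0⟩, fun x => funext fun i => i.elim0⟩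
      simp [tsum_eq_single (default : Fin 0 → ℤ) (fun b hb => absurd (Subsingleton.elim b _) hb)]
  | succ n ih =>
    set e : ℤ × (Fin n → ℤ) ≃ (Fin (n + 1) → ℤ) := Fin.consEquiv fun _ => ℤ with he
    have key : ∀ p : ℤ × (Fin n → ℤ),
        (∏ i, f (e p i)) = f p.1 * ∏ i, f (p.2 i) := by
      intro p
      simp [he, Fin.consEquiv, Fin.prod_univ_succ]
    constructor
    · rw [← e.summable_iff]
      exact (hf.mul_norm ih.1).congr fun p => by rw [Function.comp_apply, key]
    · rw [← e.tsum_eq, pow_succ, mul_comm ((∑' k, f k) ^ n), ← ih.2,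
        tsum_mul_tsum_of_summable_norm hf ih.1]
      exact tsum_congr key

lemma parity_lemma (n : ℕ) (x : Fin n → ℤ) :
    Even (∑ i, x i) ↔ Even (∑ i, (x i).natAbs) := by
  have h : Even ((∑ i, x i) - ∑ i, ((x i).natAbs : ℤ)) := by
    rw [← Finset.sum_sub_distrib]
    have hdvd : (2 : ℤ) ∣ ∑ i, (x i - ((x i).natAbs : ℤ)) := by
      apply Finset.dvd_sum
      intro i _
      omega
    obtain ⟨k, hk⟩ := hdvd
    exact ⟨k, by linarith⟩
  have := Int.even_sub.mp h
  rw [this, ← Nat.cast_sum, Int.even_coe_nat]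

/-- Example: the ℓ¹-theta function of the checkerboard lattice `Dₙ`. -/
theorem theta_one_Dn (n : ℕ) (q : ℝ) (hq0 : 0 ≤ q) (hq1 : q < 1) :
    Summable (fun x : {x : Fin n → ℤ // Even (∑ i, x i)} =>
      q ^ (∑ i, (x.val i).natAbs)) ∧
    ∑' x : {x : Fin n → ℤ // Even (∑ i, x i)}, q ^ (∑ i, (x.val i).natAbs)
      = ((1 + q) ^ (2 * n) + (1 - q) ^ (2 * n)) / (2 * (1 - q ^ 2) ^ n) := by
  have habs : |q| < 1 := abs_lt.mpr ⟨by linarith, hq1⟩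
  have habsneg : |(-q)| < 1 := by rwa [abs_neg]
  have hfp := pi_prod (fun k => q ^ k.natAbs) (int_summable habs) n
  have hfn := pi_prod (fun k => (-q) ^ k.natAbs) (int_summable habsneg) n
  have hgp : ∀ x : Fin n → ℤ, (∏ i, q ^ (x i).natAbs) = q ^ (∑ i, (x i).natAbs) :=
    fun x => Finset.prod_pow_eq_pow_sum _ _ _
  have hgn : ∀ x : Fin n → ℤ, (∏ i, (-q) ^ (x i).natAbs) = (-q) ^ (∑ i, (x i).natAbs) :=
    fun x => Finset.prod_pow_eq_pow_sum _ _ _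
  have hSp : Summable (fun x : Fin n → ℤ => q ^ (∑ i, (x i).natAbs)) :=
    (hfp.1.of_norm).congr hgp
  have hSn : Summable (fun x : Fin n → ℤ => (-q) ^ (∑ i, (x i).natAbs)) :=
    (hfn.1.of_norm).congr hgn
  constructor
  · exact hSp.subtype _
  · -- evaluate the two full sums
    have hne1 : (1 : ℝ) - q ≠ 0 := by linarith
    have hne2 : (1 : ℝ) + q ≠ 0 := by linarith
    have hA : ∑' x : Fin n → ℤ, q ^ (∑ i, (x i).natAbs) = ((1 + q) / (1 - q)) ^ n := by
      rw [← tsum_congr hgp, hfp.2, int_tsum habs]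
    have hB : ∑' x : Fin n → ℤ, (-q) ^ (∑ i, (x i).natAbs) = ((1 - q) / (1 + q)) ^ n := by
      rw [← tsum_congr hgn, hfn.2, int_tsum habsneg]
      ring_nf
    have hind : ∀ x : Fin n → ℤ,
        Set.indicator {x : Fin n → ℤ | Even (∑ i, x i)}
          (fun x => q ^ (∑ i, (x i).natAbs)) x
        = (q ^ (∑ i, (x i).natAbs) + (-q) ^ (∑ i, (x i).natAbs)) / 2 := by
      intro x
      have hneg : (-q) ^ (∑ i, (x i).natAbs)
          = (-1 : ℝ) ^ (∑ i, (x i).natAbs) * q ^ (∑ i, (x i).natAbs) := by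
        rw [← neg_one_mul, mul_pow]
      by_cases hx : Even (∑ i, x i)
      · have hmem : x ∈ {x : Fin n → ℤ | Even (∑ i, x i)} := hx
        rw [Set.indicator_of_mem hmem, hneg,
          Even.neg_one_pow ((parity_lemma n x).mp hx)]
        ring
      · have hmem : x ∉ {x : Fin n → ℤ | Even (∑ i, x i)} := hx
        rw [Set.indicator_of_notMem hmem, hneg,
          Odd.neg_one_pow (Nat.not_even_iff_odd.mp ((parity_lemma n x).not.mp hx))]
        ring
    calc ∑' x : {x : Fin n → ℤ // Even (∑ i, x i)}, q ^ (∑ i, (x.val i).natAbs)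
        = ∑' x : Fin n → ℤ, Set.indicator {x : Fin n → ℤ | Even (∑ i, x i)}
            (fun x => q ^ (∑ i, (x i).natAbs)) x := by
            exact tsum_subtype {x : Fin n → ℤ | Even (∑ i, x i)}
              (fun x => q ^ (∑ i, (x i).natAbs))
      _ = ∑' x : Fin n → ℤ,
            (q ^ (∑ i, (x i).natAbs) + (-q) ^ (∑ i, (x i).natAbs)) / 2 :=
          tsum_congr hind
      _ = ((∑' x : Fin n → ℤ, q ^ (∑ i, (x i).natAbs))
            + ∑' x : Fin n → ℤ, (-q) ^ (∑ i, (x i).natAbs)) / 2 := by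
          rw [tsum_div_const, Summable.tsum_add hSp hSn]
      _ = (((1 + q) / (1 - q)) ^ n + ((1 - q) / (1 + q)) ^ n) / 2 := by rw [hA, hB]
      _ = ((1 + q) ^ (2 * n) + (1 - q) ^ (2 * n)) / (2 * (1 - q ^ 2) ^ n) := by
          have h3 : (1 : ℝ) - q ^ 2 = (1 - q) * (1 + q) := by ring
          rw [h3, div_pow, div_pow, mul_pow, two_mul, pow_add, pow_add,
            div_add_div _ _ (pow_ne_zero n hne1) (pow_ne_zero n hne2)]
          rw [div_div, div_eq_div_iff
            (mul_ne_zero (mul_ne_zero (pow_ne_zero _ hne1) (pow_ne_zero _ hne2)) two_ne_zero)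
            (mul_ne_zero two_ne_zero (mul_ne_zero (pow_ne_zero _ hne1) (pow_ne_zero _ hne2)))]
          ring
end

section
/- Let K ⊆ ℝ^n be a convex body symmetric about the origin (K compact, convex, K = −K, 0 ∈ int K), with induced gauge ‖x‖_K = inf{t ≥ 0 : x ∈ tK}. Let B be an invertible n × n real matrix generating the lattice Λ = {mB : m ∈ ℤ^n}, and suppose Λ is admissible for K, i.e. ‖v‖_K ≥ 1 for every v ∈ Λ \ {0}. Suppose further that B is locally critical: there is a neighborhood U of B in the space of n × n real matrices such that every B' ∈ U whose lattice {mB' : m ∈ ℤ^n} is admissible for K satisfies |det B'| ≥ |det B|. Then Λ is well-rounded with respect to ‖·‖_K: the set of minimal vectors M_K(Λ) = {v ∈ Λ \ {0} : ‖v‖_K = 1} spans ℝ^n as a real vector space. -/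
open Matrix Set Metric Filter

private lemma vecMul_smul_right {n : ℕ} (t : ℝ) (M : Matrix (Fin n) (Fin n) ℝ)
    (x : Fin n → ℝ) : x ᵥ* (t • M) = t • (x ᵥ* M) := by
  ext j
  simp [Matrix.vecMul, dotProduct, Finset.mul_sum, mul_left_comm]

set_option maxHeartbeats 2000000 in
/-- Proposition: a locally critical lattice with respect to a symmetric convex
body is well-rounded with respect to the induced norm. -/
theorem locally_critical_well_rounded
    (n : ℕ) (K : Set (Fin n → ℝ))
    (hKcompact : IsCompact K) (hKconvex : Convex ℝ K) (hKsymm : K = -K)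
    (hK0 : (0 : Fin n → ℝ) ∈ interior K)
    (B : Matrix (Fin n) (Fin n) ℝ) (hB : IsUnit B.det)
    (hadm : ∀ m : Fin n → ℤ, m ≠ 0 →
      1 ≤ gauge K (Matrix.vecMul (fun k => (m k : ℝ)) B))
    (hcrit : ∃ U ∈ nhds B, ∀ B' ∈ U,
      (∀ m : Fin n → ℤ, m ≠ 0 →
        1 ≤ gauge K (Matrix.vecMul (fun k => (m k : ℝ)) B')) →
      |B.det| ≤ |Matrix.det B'|) :
    Submodule.span ℝ {v : Fin n → ℝ |
        (∃ m : Fin n → ℤ, m ≠ 0 ∧ v = Matrix.vecMul (fun k => (m k : ℝ)) B) ∧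
        gauge K v = 1} = ⊤ := by
  classical
  by_contra hW
  set S : Set (Fin n → ℝ) := {v : Fin n → ℝ |
        (∃ m : Fin n → ℤ, m ≠ 0 ∧ v = Matrix.vecMul (fun k => (m k : ℝ)) B) ∧
        gauge K v = 1} with hSdef
  set W : Submodule ℝ (Fin n → ℝ) := Submodule.span ℝ S with hWdef
  -- basic gauge facts
  have hKnhds : K ∈ nhds (0 : Fin n → ℝ) := mem_interior_iff_mem_nhds.mp hK0
  have habs : Absorbent ℝ K := absorbent_nhds_zero hKnhds
  have hsymm : ∀ x ∈ K, -x ∈ K := by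
    intro x hx
    rw [hKsymm] at hx
    exact Set.mem_neg.mp hx
  have hneg : ∀ x, gauge K (-x) = gauge K x := gauge_neg hsymm
  have hsmul : ∀ (a : ℝ) (x : Fin n → ℝ), gauge K (a • x) = |a| * gauge K x := by
    intro a x
    rcases le_or_gt 0 a with h | h
    · rw [gauge_smul_of_nonneg h, abs_of_nonneg h, smul_eq_mul]
    · have hax : a • x = -((-a) • x) := by simp
      rw [hax, hneg, gauge_smul_of_nonneg (by linarith), abs_of_neg h, smul_eq_mul]
  have htri : ∀ x y : Fin n → ℝ, gauge K x - gauge K y ≤ gauge K (x - y) := by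
    intro x y
    have h := gauge_add_le hKconvex habs (x - y) y
    rw [sub_add_cancel] at h
    linarith
  -- inner and outer radii
  obtain ⟨r, hr, hrK⟩ := Metric.mem_nhds_iff.mp hKnhds
  obtain ⟨R₀, hR₀⟩ := hKcompact.isBounded.subset_closedBall 0
  set R : ℝ := max R₀ 0 + 1 with hRdef
  have hRpos : (0:ℝ) < R := by positivity
  have hKR : K ⊆ closedBall 0 R := hR₀.trans (closedBall_subset_closedBall (by
    simp [hRdef]
    linarith [le_max_left R₀ (0:ℝ)]))
  have hlow : ∀ x : Fin n → ℝ, ‖x‖ / R ≤ gauge K x := fun x =>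
    le_gauge_of_subset_closedBall habs hRpos.le hKR
  have hlow' : ∀ x : Fin n → ℝ, ‖x‖ ≤ R * gauge K x := by
    intro x
    have := hlow x
    rw [div_le_iff₀ hRpos] at this
    linarith [this]
  have hup : ∀ x : Fin n → ℝ, gauge K x ≤ ‖x‖ / r := by
    intro x
    have := mul_gauge_le_norm hrK (x := x)
    rw [le_div_iff₀ hr]
    linarith
  -- finiteness of small lattice vectors
  set CB : ℝ := ‖LinearMap.toContinuousLinearMap ((B⁻¹ : Matrix (Fin n) (Fin n) ℝ).vecMulLinear)‖
    with hCBdef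
  have hrec : ∀ m : Fin n → ℤ, (fun k => (m k : ℝ)) =
      Matrix.vecMul (Matrix.vecMul (fun k => (m k : ℝ)) B) B⁻¹ := by
    intro m
    rw [Matrix.vecMul_vecMul, Matrix.mul_nonsing_inv _ hB, Matrix.vecMul_one]
  have hbound : ∀ m : Fin n → ℤ, ‖(fun k => (m k : ℝ))‖ ≤
      CB * (R * gauge K (Matrix.vecMul (fun k => (m k : ℝ)) B)) := by
    intro m
    calc ‖(fun k => (m k : ℝ))‖
        = ‖(B⁻¹ : Matrix (Fin n) (Fin n) ℝ).vecMulLinear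
            (Matrix.vecMul (fun k => (m k : ℝ)) B)‖ := by
          rw [Matrix.vecMulLinear_apply]; exact congrArg _ (hrec m)
      _ ≤ CB * ‖Matrix.vecMul (fun k => (m k : ℝ)) B‖ :=
          (LinearMap.toContinuousLinearMap _).le_opNorm _
      _ ≤ CB * (R * gauge K (Matrix.vecMul (fun k => (m k : ℝ)) B)) := by
          have h1 := hlow' (Matrix.vecMul (fun k => (m k : ℝ)) B)
          have h2 : (0:ℝ) ≤ CB := norm_nonneg _
          nlinarith
  have hCBnn : (0:ℝ) ≤ CB := norm_nonneg _
  have hFfin : {m : Fin n → ℤ | gauge K (Matrix.vecMul (fun k => (m k : ℝ)) B) ≤ 2}.Finite := by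
    set C : ℝ := CB * (R * 2) with hCdef
    apply Set.Finite.subset (Set.Finite.pi (fun i : Fin n => Set.finite_Icc (-⌈C⌉) ⌈C⌉))
    intro m hm
    have hmn : ‖(fun k => (m k : ℝ))‖ ≤ C := by
      have := hbound m
      have h2 : gauge K (Matrix.vecMul (fun k => (m k : ℝ)) B) ≤ 2 := hm
      have h3 : (0:ℝ) ≤ gauge K (Matrix.vecMul (fun k => (m k : ℝ)) B) := gauge_nonneg _
      nlinarith [mul_nonneg hCBnn hRpos.le]
    intro i _
    have hi : |(m i : ℝ)| ≤ C := by
      have := norm_le_pi_norm (fun k => (m k : ℝ)) i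
      simp only [Real.norm_eq_abs] at this
      linarith
    have hiz : |m i| ≤ ⌈C⌉ := by
      have h1 : ((|m i| : ℤ) : ℝ) ≤ (⌈C⌉ : ℝ) := by
        rw [Int.cast_abs]
        exact hi.trans (Int.le_ceil C)
      exact_mod_cast h1
    rw [Set.mem_Icc]
    exact abs_le.mp hiz
  -- the gap δ
  have hδ : ∃ δ > (0:ℝ), ∀ m : Fin n → ℤ, m ≠ 0 →
      gauge K (Matrix.vecMul (fun k => (m k : ℝ)) B) ≤ 2 →
      gauge K (Matrix.vecMul (fun k => (m k : ℝ)) B) ≠ 1 →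
      1 + δ ≤ gauge K (Matrix.vecMul (fun k => (m k : ℝ)) B) := by
    set G : Set (Fin n → ℤ) := {m | m ≠ 0 ∧
      gauge K (Matrix.vecMul (fun k => (m k : ℝ)) B) ≤ 2 ∧
      gauge K (Matrix.vecMul (fun k => (m k : ℝ)) B) ≠ 1} with hGdef
    have hGfin : G.Finite := hFfin.subset (fun m hm => hm.2.1)
    rcases G.eq_empty_or_nonempty with hG | hG
    · refine ⟨1, one_pos, fun m h1 h2 h3 => absurd ?_ (by simp [hG] : m ∉ G)⟩
      exact ⟨h1, h2, h3⟩
    · obtain ⟨m₀, hm₀G, hmin⟩ := hGfin.toFinset.exists_min_image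
        (fun m => gauge K (Matrix.vecMul (fun k => (m k : ℝ)) B))
        (by rwa [Set.Finite.toFinset_nonempty])
      rw [Set.Finite.mem_toFinset] at hm₀G
      refine ⟨gauge K (Matrix.vecMul (fun k => (m₀ k : ℝ)) B) - 1, ?_, ?_⟩
      · have h1 := hadm m₀ hm₀G.1
        have h2 := hm₀G.2.2
        rcases lt_or_eq_of_le h1 with h | h
        · linarith
        · exact absurd h.symm h2
      · intro m h1 h2 h3
        have hmem : m ∈ hGfin.toFinset := by
          rw [Set.Finite.mem_toFinset]; exact ⟨h1, h2, h3⟩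
        have := hmin m hmem
        linarith
  obtain ⟨δ, hδpos, hgap⟩ := hδ
  -- a vector outside W and a dual functional
  have hu : ∃ u : Fin n → ℝ, u ∉ W := by
    by_contra h
    push_neg at h
    exact hW (Submodule.eq_top_iff'.mpr h)
  obtain ⟨u, hu⟩ := hu
  obtain ⟨f, hfu, hfW⟩ := W.exists_dual_map_eq_bot_of_notMem hu inferInstance
  set g : Module.Dual ℝ (Fin n → ℝ) := (f u)⁻¹ • f with hgdef
  have hgu : g u = 1 := by
    simp only [hgdef, LinearMap.smul_apply, smul_eq_mul]
    exact inv_mul_cancel₀ hfu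
  have hgW : ∀ w ∈ W, g w = 0 := by
    intro w hw
    have : f w ∈ W.map f := Submodule.mem_map_of_mem hw
    rw [hfW, Submodule.mem_bot] at this
    simp [hgdef, this]
  -- the rank-one perturbation matrix
  set c : Fin n → ℝ := fun i => g (fun j => if i = j then 1 else 0) with hcdef
  have hgc : ∀ x : Fin n → ℝ, x ⬝ᵥ c = g x := by
    intro x
    rw [LinearMap.pi_apply_eq_sum_univ g x]
    simp [dotProduct, hcdef, smul_eq_mul]
  set E : Matrix (Fin n) (Fin n) ℝ := Matrix.of (fun i j => c i * u j) with hEdef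
  have hEv : ∀ x : Fin n → ℝ, x ᵥ* E = g x • u := by
    intro x
    funext j
    have : ∑ i, x i * (c i * u j) = (∑ i, x i * c i) * u j := by
      rw [Finset.sum_mul]
      exact Finset.sum_congr rfl (fun i _ => by ring)
    simp only [Matrix.vecMul, dotProduct, hEdef, Matrix.of_apply, Pi.smul_apply, smul_eq_mul]
    rw [this, ← hgc x]
    rfl
  have himg : ∀ (t : ℝ) (x : Fin n → ℝ),
      x ᵥ* ((1 : Matrix (Fin n) (Fin n) ℝ) - t • E) = x - (t * g x) • u := by
    intro t x
    rw [Matrix.vecMul_sub, Matrix.vecMul_one, vecMul_smul_right, hEv]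
    funext j
    simp [mul_assoc]
  have hEdet : ∀ t : ℝ, ((1 : Matrix (Fin n) (Fin n) ℝ) - t • E).det = 1 - t := by
    intro t
    have h1 : (1 : Matrix (Fin n) (Fin n) ℝ) - t • E =
        1 + Matrix.replicateCol Unit ((-t) • c) * Matrix.replicateRow Unit u := by
      ext i j
      simp [Matrix.mul_apply, Matrix.replicateCol, Matrix.replicateRow, hEdef, Matrix.one_apply]
      ring
    rw [h1, Matrix.det_one_add_replicateCol_mul_replicateRow]
    have : u ⬝ᵥ ((-t) • c) = (-t) * (u ⬝ᵥ c) := by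
      simp [dotProduct, Finset.mul_sum]
      exact Finset.sum_congr rfl (fun i _ => by ring)
    rw [this, hgc u, hgu]
    ring
  -- constants
  set Cg : ℝ := ‖LinearMap.toContinuousLinearMap g‖ with hCgdef
  have hCgnn : (0:ℝ) ≤ Cg := norm_nonneg _
  have hgb : ∀ x : Fin n → ℝ, |g x| ≤ Cg * (R * gauge K x) := by
    intro x
    have h1 : |g x| ≤ Cg * ‖x‖ := (LinearMap.toContinuousLinearMap g).le_opNorm x
    have h2 := hlow' x
    nlinarith
  set Cu : ℝ := gauge K u with hCudef
  have hCunn : (0:ℝ) ≤ Cu := gauge_nonneg _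
  set C2 : ℝ := Cg * (2 * R) * Cu + 1 with hC2def
  set C3 : ℝ := Cg * R * Cu + 1 with hC3def
  have hC2pos : (0:ℝ) < C2 := by positivity
  have hC3pos : (0:ℝ) < C3 := by positivity
  -- the neighborhood
  obtain ⟨U, hU, hUc⟩ := hcrit
  have htend : Filter.Tendsto (fun t : ℝ => B * ((1 : Matrix (Fin n) (Fin n) ℝ) - t • E))
      (nhds 0) (nhds B) := by
    have hcont : Continuous (fun t : ℝ => B * ((1 : Matrix (Fin n) (Fin n) ℝ) - t • E)) := by
      have : (fun t : ℝ => B * ((1 : Matrix (Fin n) (Fin n) ℝ) - t • E)) =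
          (fun t : ℝ => B - t • (B * E)) := by
        funext t
        rw [Matrix.mul_sub, Matrix.mul_one, Matrix.mul_smul]
      rw [this]
      exact continuous_const.sub (continuous_id.smul continuous_const)
    simpa using hcont.tendsto 0
  have hev : ∀ᶠ t : ℝ in nhds 0, B * ((1 : Matrix (Fin n) (Fin n) ℝ) - t • E) ∈ U :=
    htend.eventually_mem hU
  obtain ⟨ε, hε, hball⟩ := Metric.eventually_nhds_iff.mp hev
  -- choose t
  set t : ℝ := min (min (ε / 2) (δ / C2)) (min (1 / (2 * C3)) (1 / 2)) with htdef
  have ht0 : 0 < t := lt_min (lt_min (by positivity) (by positivity))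
    (lt_min (by positivity) (by positivity))
  have htε : t < ε := lt_of_le_of_lt ((min_le_left _ _).trans (min_le_left _ _)) (by linarith)
  have htδ : t * C2 ≤ δ :=
    (le_div_iff₀ hC2pos).mp ((min_le_left _ _).trans (min_le_right _ _))
  have htC3 : t * C3 ≤ 1 / 2 := by
    have h1 : t ≤ (1 / 2) / C3 := by
      rw [div_div]
      exact (min_le_right _ _).trans (min_le_left _ _)
    exact (le_div_iff₀ hC3pos).mp h1
  have ht2 : t ≤ 1 / 2 := (min_le_right _ _).trans (min_le_right _ _)
  set B' : Matrix (Fin n) (Fin n) ℝ := B * ((1 : Matrix (Fin n) (Fin n) ℝ) - t • E) with hB'def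
  have hB'U : B' ∈ U := hball (by simpa [Real.dist_eq, abs_of_pos ht0] using htε)
  -- B' is admissible
  have hadm' : ∀ m : Fin n → ℤ, m ≠ 0 →
      1 ≤ gauge K (Matrix.vecMul (fun k => (m k : ℝ)) B') := by
    intro m hm
    set v : Fin n → ℝ := Matrix.vecMul (fun k => (m k : ℝ)) B with hvdef
    have hvB' : Matrix.vecMul (fun k => (m k : ℝ)) B' = v - (t * g v) • u := by
      rw [hB'def, ← Matrix.vecMul_vecMul, ← hvdef, himg]
    have hv1 : 1 ≤ gauge K v := hadm m hm
    by_cases h1 : gauge K v = 1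
    · have hvS : v ∈ S := ⟨⟨m, hm, hvdef⟩, h1⟩
      have hgv0 : g v = 0 := hgW v (Submodule.subset_span hvS)
      rw [hvB', hgv0]
      simp [h1]
    · have hkey : gauge K v - t * |g v| * Cu ≤
          gauge K (Matrix.vecMul (fun k => (m k : ℝ)) B') := by
        rw [hvB']
        have h2 := htri v ((t * g v) • u)
        rw [hsmul] at h2
        have h3 : |t * g v| = t * |g v| := by rw [abs_mul, abs_of_pos ht0]
        rw [h3] at h2
        linarith [h2]
      have hgv := hgb v
      by_cases h2 : gauge K v ≤ 2
      · have hga := hgap m hm h2 h1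
        have h4 : |g v| ≤ Cg * (R * 2) := by
          nlinarith [mul_nonneg (mul_nonneg hCgnn hRpos.le) (by linarith : (0:ℝ) ≤ 2 - gauge K v)]
        have h5 : t * |g v| * Cu ≤ t * (Cg * (2 * R) * Cu) := by
          nlinarith [mul_nonneg (by linarith : (0:ℝ) ≤ Cg * (R * 2) - |g v|)
            (mul_nonneg ht0.le hCunn)]
        have h6 : t * (Cg * (2 * R) * Cu) ≤ δ := by
          rw [hC2def] at htδ
          nlinarith [ht0.le]
        linarith [hkey, hga, h5, h6]
      · push_neg at h2
        have h4 : t * |g v| * Cu ≤ (t * (Cg * R * Cu)) * gauge K v := by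
          nlinarith [mul_nonneg (by linarith [hgv] : (0:ℝ) ≤ Cg * (R * gauge K v) - |g v|)
            (mul_nonneg ht0.le hCunn)]
        have h5 : t * (Cg * R * Cu) ≤ 1 / 2 := by
          rw [hC3def] at htC3
          nlinarith [ht0.le]
        have h6 : (t * (Cg * R * Cu)) * gauge K v ≤ (1 / 2) * gauge K v :=
          mul_le_mul_of_nonneg_right h5 (gauge_nonneg _)
        have h8 : t * |g v| * Cu ≤ 1 / 2 * gauge K v := h4.trans h6
        have h7 : 1 ≤ gauge K v - t * |g v| * Cu := by nlinarith [h8, h2]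
        exact h7.trans hkey
  -- contradiction with local criticality
  have hfinal := hUc B' hB'U hadm'
  have hB'det : B'.det = B.det * (1 - t) := by
    rw [hB'def, Matrix.det_mul, hEdet t]
  rw [hB'det, abs_mul] at hfinal
  have hdetpos : (0:ℝ) < |B.det| := abs_pos.mpr hB.ne_zero
  have habs1 : |1 - t| = 1 - t := abs_of_pos (by linarith)
  rw [habs1] at hfinal
  nlinarith [hdetpos, ht0]
end

section
/- Let B be an invertible n × n real matrix whose rows b₁, …, bₙ satisfy ‖bᵢ‖₁ = 1 for all i, and suppose the lattice Λ = {mB : m ∈ ℤ^n} is admissible for the ℓ¹-norm, i.e. ‖v‖₁ ≥ 1 for every v ∈ Λ \ {0}. If m ∈ ℤ^n satisfies ‖∑_{i=1}^n mᵢ bᵢ‖₁ = 1, then |mᵢ| ≤ n! for all i = 1, …, n. -/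
/-!
Replacing the `i`-th row of `B` by the minimal vector `m B` multiplies the determinant by `mᵢ`.
All rows of the new matrix have ℓ¹-norm one, so the ℓ¹ form of Hadamard's inequality bounds its
determinant by one: `|mᵢ| |det B| ≤ 1`. On the other hand, Minkowski's convex body theorem applied
to the open cross-polytope, of volume `2ⁿ / n!`, shows that an admissible lattice has
`|det B| ≥ 1 / n!`.
-/

open Matrix MeasureTheory

theorem Matrix.abs_det_le_prod_sum_abs {ι R : Type*} [Fintype ι] [DecidableEq ι] [CommRing R]
    [LinearOrder R] [IsStrictOrderedRing R] (A : Matrix ι ι R) :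
    |A.det| ≤ ∏ i, ∑ j, |A i j| := by
  rw [← det_transpose, det_apply', Fintype.prod_sum fun i j => |A i j|]
  let asFun : Equiv.Perm ι ↪ (ι → ι) := ⟨fun σ => σ, DFunLike.coe_injective⟩
  calc |∑ σ : Equiv.Perm ι, (Equiv.Perm.sign σ : R) * ∏ i, Aᵀ (σ i) i|
      ≤ ∑ σ : Equiv.Perm ι, ∏ i, |A i (σ i)| := by
        refine (Finset.abs_sum_le_sum_abs _ _).trans_eq (Finset.sum_congr rfl fun σ _ => ?_)
        simp [abs_mul, Finset.abs_prod, ← Int.cast_abs]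
    _ = ∑ f ∈ Finset.univ.map asFun, ∏ i, |A i (f i)| := by rw [Finset.sum_map]; rfl
    _ ≤ ∑ f : ι → ι, ∏ i, |A i (f i)| :=
        Finset.sum_le_sum_of_subset_of_nonneg (Finset.subset_univ _)
          fun _ _ _ => Finset.prod_nonneg fun _ _ => abs_nonneg _

theorem Matrix.det_updateRow_vecMul {ι R : Type*} [Fintype ι] [DecidableEq ι] [CommRing R]
    (B : Matrix ι ι R) (i : ι) (v : ι → R) : (B.updateRow i (v ᵥ* B)).det = v i * B.det := by
  rw [vecMul_eq_sum, det_updateRow_sum, smul_eq_mul]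

theorem volume_sum_abs_lt_one (ι : Type*) [Fintype ι] :
    volume {x : ι → ℝ | ∑ i, |x i| < 1} =
      .ofReal (2 ^ Fintype.card ι / (Fintype.card ι).factorial) := by
  have := volume_sum_rpow_lt_one ι (p := 1) le_rfl
  simp only [Real.rpow_one, div_one] at this
  rw [this, one_add_one_eq_two, Real.Gamma_two, Real.Gamma_nat_eq_factorial, mul_one]

theorem convex_sum_abs_lt (ι : Type*) [Fintype ι] (r : ℝ) :
    Convex ℝ {x : ι → ℝ | ∑ i, |x i| < r} := by
  have : {x : ι → ℝ | ∑ i, |x i| < r} = WithLp.toLp 1 ⁻¹' Metric.ball 0 r := by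
    ext x; simp [PiLp.norm_eq_of_L1]
  rw [this]
  exact (convex_ball 0 r).linear_preimage (WithLp.linearEquiv 1 ℝ (ι → ℝ)).symm.toLinearMap

theorem Matrix.exists_intCast_vecMul_mem_of_volume_lt {ι : Type*} [Fintype ι] [DecidableEq ι]
    (B : Matrix ι ι ℝ) (hB : IsUnit B.det) {s : Set (ι → ℝ)} (h_symm : ∀ x ∈ s, -x ∈ s)
    (h_conv : Convex ℝ s) (h : .ofReal |B.det| * 2 ^ Fintype.card ι < volume s) :
    ∃ v : ι → ℤ, v ≠ 0 ∧ (fun k => (v k : ℝ)) ᵥ* B ∈ s := by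
  let b : Module.Basis ι ℝ (ι → ℝ) := basisOfLinearIndependentOfCardEqFinrank'
    B.row (linearIndependent_rows_of_isUnit ((isUnit_iff_isUnit_det B).mpr hB)) (by simp)
  have hb : ⇑b = B := by ext; simp [b]
  have : Countable (Submodule.span ℤ (Set.range b)).toAddSubgroup :=
    inferInstanceAs (Countable (Submodule.span ℤ (Set.range b)))
  obtain ⟨⟨x, hx⟩, hx0, hxs⟩ := exists_ne_zero_mem_lattice_of_measure_mul_two_pow_lt_measure
    (ZSpan.isAddFundamentalDomain' b volume) h_symm h_conv
    (by rw [ZSpan.volume_fundamentalDomain, hb, Module.finrank_fintype_fun_eq_card]; exact h)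
  obtain ⟨v, rfl⟩ := (Submodule.mem_span_range_iff_exists_fun ℤ).mp hx
  refine ⟨v, fun hv => hx0 (by simp [hv]), ?_⟩
  convert hxs using 1
  rw [vecMul_eq_sum, ← hb]
  simp only [Int.cast_smul_eq_zsmul]

theorem Matrix.one_le_factorial_mul_abs_det_of_admissible {ι : Type*} [Fintype ι] [DecidableEq ι]
    (B : Matrix ι ι ℝ) (hB : IsUnit B.det)
    (hadm : ∀ v : ι → ℤ, v ≠ 0 → 1 ≤ ∑ j, |((fun k => (v k : ℝ)) ᵥ* B) j|) :
    1 ≤ (Fintype.card ι).factorial * |B.det| := by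
  by_contra! hlt
  have hvol : .ofReal |B.det| * 2 ^ Fintype.card ι < volume {x : ι → ℝ | ∑ i, |x i| < 1} := by
    rw [volume_sum_abs_lt_one, ← ENNReal.ofReal_ofNat 2, ← ENNReal.ofReal_pow zero_le_two,
      ← ENNReal.ofReal_mul (abs_nonneg _), ENNReal.ofReal_lt_ofReal_iff (by positivity),
      lt_div_iff₀ (by positivity), mul_right_comm, mul_comm |B.det|]
    exact mul_lt_of_lt_one_left (by positivity) hlt
  obtain ⟨v, hv0, hv⟩ := B.exists_intCast_vecMul_mem_of_volume_lt hB
    (fun x hx => by simpa using hx) (convex_sum_abs_lt ι 1) hvol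
  exact (hadm v hv0).not_gt hv

/-- Corollary: in a lattice admissible for the ℓ¹-norm with a basis of minimal
vectors, the coefficients of any minimal vector are bounded by `n!`. -/
theorem minimal_vector_coeff_bound
    (n : ℕ) (B : Matrix (Fin n) (Fin n) ℝ) (hB : IsUnit B.det)
    (h1 : ∀ i, ∑ j, |B i j| = 1)
    (hadm : ∀ v : Fin n → ℤ, v ≠ 0 →
      1 ≤ ∑ j, |Matrix.vecMul (fun k => (v k : ℝ)) B j|)
    (m : Fin n → ℤ)
    (hm : ∑ j, |Matrix.vecMul (fun k => (m k : ℝ)) B j| = 1) :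
    ∀ i, |m i| ≤ (Nat.factorial n : ℤ) := by
  intro i
  have hrow : ∀ k, ∑ j, |B.updateRow i ((fun k => (m k : ℝ)) ᵥ* B) k j| = 1 := fun k => by
    rcases eq_or_ne k i with rfl | hk
    · simpa using hm
    · simpa [updateRow_ne hk] using h1 k
  have hupper : |(m i : ℝ)| * |B.det| ≤ 1 :=
    calc |(m i : ℝ)| * |B.det| = |(B.updateRow i ((fun k => (m k : ℝ)) ᵥ* B)).det| := by
          rw [det_updateRow_vecMul, abs_mul]
      _ ≤ 1 := (abs_det_le_prod_sum_abs _).trans_eq (Finset.prod_eq_one fun k _ => hrow k)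
  have hlower := B.one_le_factorial_mul_abs_det_of_admissible hB hadm
  rw [Fintype.card_fin] at hlower
  have : |(m i : ℝ)| ≤ n.factorial :=
    le_of_mul_le_mul_right (hupper.trans hlower) (abs_pos.mpr hB.ne_zero)
  exact_mod_cast this
end

section
/- Let B be an invertible n × n real matrix whose lattice Λ = {mB : m ∈ ℤ^n} satisfies ‖v‖₁ ≥ 1 for every v ∈ Λ \ {0}. Then the set of minimal vectors with large max-norm, S = {v ∈ Λ : ‖v‖₁ = 1 and ‖v‖_∞ > 1/2}, contains at most n antipodal pairs; that is, |S| ≤ 2n. Equivalently, there do not exist an index i and minimal vectors x, y ∈ Λ with ‖x‖₁ = ‖y‖₁ = 1, x ∉ {y, −y}, and |xᵢ| > 1/2, |yᵢ| > 1/2 — indeed, if x, y ∈ ℝ^n satisfy ‖x‖₁ = ‖y‖₁ = 1 and xᵢ ≥ yᵢ > 1/2 for some i, then ‖x − y‖₁ < 1. -/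
lemma key_ineq (n : ℕ) (x y : Fin n → ℝ) (i : Fin n)
    (hx : (∑ j, |x j|) = 1) (hy : (∑ j, |y j|) = 1)
    (hyi : 1 / 2 < y i) (hxy : y i ≤ x i) : ∑ j, |x j - y j| < 1 := by
  have ex : ∑ j, |x j - y j|
      = |x i - y i| + ∑ j ∈ Finset.univ.erase i, |x j - y j| :=
    (Finset.add_sum_erase _ _ (Finset.mem_univ i)).symm
  have exx : ∑ j, |x j| = |x i| + ∑ j ∈ Finset.univ.erase i, |x j| :=
    (Finset.add_sum_erase _ _ (Finset.mem_univ i)).symm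
  have eyy : ∑ j, |y j| = |y i| + ∑ j ∈ Finset.univ.erase i, |y j| :=
    (Finset.add_sum_erase _ _ (Finset.mem_univ i)).symm
  have hb : ∑ j ∈ Finset.univ.erase i, |x j - y j|
      ≤ ∑ j ∈ Finset.univ.erase i, (|x j| + |y j|) :=
    Finset.sum_le_sum fun j _ => abs_sub _ _
  rw [Finset.sum_add_distrib] at hb
  have h1 : |x i - y i| = x i - y i := abs_of_nonneg (by linarith)
  have h2 : |x i| = x i := abs_of_nonneg (by linarith)
  have h3 : |y i| = y i := abs_of_nonneg (by linarith)
  rw [exx, h2] at hx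
  rw [eyy, h3] at hy
  rw [ex, h1]
  linarith

/-- Lemma: a lattice admissible for the ℓ¹-norm has at most `n` antipodal pairs
of minimal vectors of max-norm greater than `1/2`; indeed two distinct minimal
vectors cannot share a coordinate of absolute value greater than `1/2`. -/
theorem few_minimal_vectors_large_max_norm
    (n : ℕ) (B : Matrix (Fin n) (Fin n) ℝ) (hB : IsUnit B.det)
    (hadm : ∀ m : Fin n → ℤ, m ≠ 0 →
      1 ≤ ∑ j, |Matrix.vecMul (fun k => (m k : ℝ)) B j|) :
    Set.ncard {v : Fin n → ℝ |
        (∃ m : Fin n → ℤ, v = Matrix.vecMul (fun k => (m k : ℝ)) B) ∧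
        (∑ j, |v j|) = 1 ∧ (∃ j, 1 / 2 < |v j|)} ≤ 2 * n ∧
    ∀ (x y : Fin n → ℝ) (i : Fin n), (∑ j, |x j|) = 1 → (∑ j, |y j|) = 1 →
      1 / 2 < y i → y i ≤ x i → ∑ j, |x j - y j| < 1 := by
  classical
  set S : Set (Fin n → ℝ) := {v : Fin n → ℝ |
        (∃ m : Fin n → ℤ, v = Matrix.vecMul (fun k => (m k : ℝ)) B) ∧
        (∑ j, |v j|) = 1 ∧ (∃ j, 1 / 2 < |v j|)} with hS
  refine ⟨?_, fun x y i hx hy hyi hxy => key_ineq n x y i hx hy hyi hxy⟩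
  -- distinct lattice vectors have ℓ¹-distance at least 1
  have hdiff : ∀ v w : Fin n → ℝ, v ∈ S → w ∈ S → v ≠ w →
      1 ≤ ∑ j, |v j - w j| := by
    intro v w hv hw hne
    obtain ⟨⟨m, hm⟩, -, -⟩ := hv
    obtain ⟨⟨m', hm'⟩, -, -⟩ := hw
    have hmm : m - m' ≠ 0 := by
      intro h
      apply hne
      have : m = m' := by
        funext k; have := congrFun h k; simpa [sub_eq_zero] using this
      rw [hm, hm', this]
    have hle := hadm _ hmm
    have hd : ∀ j, Matrix.vecMul (fun k => ((m - m') k : ℝ)) B j = v j - w j := by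
      intro j
      have hcast : (fun k => ((m - m') k : ℝ))
          = (fun k => (m k : ℝ)) - (fun k => (m' k : ℝ)) := by
        funext k; simp
      rw [hcast, Matrix.sub_vecMul, hm, hm']
      simp
    rwa [Finset.sum_congr rfl (fun j _ => by rw [hd j])] at hle
  -- two vectors of S sharing a large coordinate (same sign) are equal
  have hsame : ∀ v w : Fin n → ℝ, v ∈ S → w ∈ S → ∀ i : Fin n,
      ((1/2 < v i ∧ 1/2 < w i) ∨ (v i < -(1/2) ∧ w i < -(1/2))) → v = w := by
    intro v w hv hw i hcase
    by_contra hne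
    have h1 := hdiff v w hv hw hne
    have hv1 := hv.2.1
    have hw1 := hw.2.1
    have hsym : ∑ j, |v j - w j| = ∑ j, |w j - v j| :=
      Finset.sum_congr rfl fun j _ => abs_sub_comm _ _
    rcases hcase with ⟨hvi, hwi⟩ | ⟨hvi, hwi⟩
    · rcases le_or_gt (w i) (v i) with h | h
      · linarith [key_ineq n v w i hv1 hw1 hwi h]
      · linarith [key_ineq n w v i hw1 hv1 hvi h.le]
    · have hnv1 : (∑ j, |(-v) j|) = 1 := by simpa using hv1
      have hnw1 : (∑ j, |(-w) j|) = 1 := by simpa using hw1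
      have hsv : ∑ j, |v j - w j| = ∑ j, |(-v) j - (-w) j| :=
        Finset.sum_congr rfl fun j _ => by
          rw [Pi.neg_apply, Pi.neg_apply, neg_sub_neg, abs_sub_comm]
      rcases le_or_gt ((-w) i) ((-v) i) with h | h
      · have := key_ineq n (-v) (-w) i hnv1 hnw1 (by simp; linarith) h
        linarith [hsv ▸ this]
      · have := key_ineq n (-w) (-v) i hnw1 hnv1 (by simp; linarith) h.le
        have hsw : ∑ j, |(-w) j - (-v) j| = ∑ j, |v j - w j| :=
          Finset.sum_congr rfl fun j _ => by
            rw [Pi.neg_apply, Pi.neg_apply, neg_sub_neg]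
        linarith [hsw ▸ this]
  -- if n = 0 the set is empty
  rcases Nat.eq_zero_or_pos n with hn | hn
  · have hSe : S = ∅ := by
      ext v
      simp only [hS, Set.mem_setOf_eq, Set.mem_empty_iff_false, iff_false]
      rintro ⟨-, -, j, -⟩
      exact absurd j.2 (by omega)
    simp [hSe]
  haveI : Nonempty (Fin n) := ⟨⟨0, hn⟩⟩
  -- the coordinate-sign map
  let f : (Fin n → ℝ) → Fin n × Bool := fun v =>
    if h : ∃ j, 1/2 < v j then (h.choose, true)
    else if h' : ∃ j, v j < -(1/2) then (h'.choose, false)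
    else (Classical.arbitrary _, true)
  have hfspec : ∀ v ∈ S, (1/2 < v (f v).1 ∧ (f v).2 = true) ∨
      (v (f v).1 < -(1/2) ∧ (f v).2 = false) := by
    intro v hv
    obtain ⟨-, -, j, hj⟩ := hv
    by_cases h : ∃ j, 1/2 < v j
    · left; simp only [f, dif_pos h]; exact ⟨h.choose_spec, trivial⟩
    · have h' : ∃ j, v j < -(1/2) := by
        rcases lt_abs.mp hj with h1 | h1
        · exact absurd ⟨j, h1⟩ h
        · exact ⟨j, by linarith⟩
      right; simp only [f, dif_neg h, dif_pos h']; exact ⟨h'.choose_spec, trivial⟩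
  have hinj : Set.InjOn f S := by
    intro v hv w hw hvw
    rcases hfspec v hv with ⟨h1, h2⟩ | ⟨h1, h2⟩ <;>
      rcases hfspec w hw with ⟨h3, h4⟩ | ⟨h3, h4⟩
    · exact hsame v w hv hw (f v).1 (Or.inl ⟨h1, hvw ▸ h3⟩)
    · rw [hvw] at h2; rw [h2] at h4; exact absurd h4 (by simp)
    · rw [hvw] at h2; rw [h2] at h4; exact absurd h4 (by simp)
    · exact hsame v w hv hw (f v).1 (Or.inr ⟨h1, hvw ▸ h3⟩)
  have hcard := Set.ncard_le_ncard_of_injOn f (Set.mapsTo_univ f S) hinj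
    Set.finite_univ
  rw [Set.ncard_univ, Nat.card_eq_fintype_card] at hcard
  simpa [Fintype.card_prod, mul_comm] using hcard
end
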